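/- arXiv:2007.00048 — 5 statements merged into one kernel-verified Lean document; each statement's English description precedes it below -/
import Mathlib

section
/- The number of intervals (pairs u ≼ v) in the Hochschild lattice of size n ≥ 1 is 3^{n−3} · (n² + 9n + 17). -/
def IsTriword {n : ℕ} (u : Fin n → Fin 3) : Prop :=
  (∀ i : Fin n, (i : ℕ) = 0 → u i ≠ 2) ∧
  ∀ i j : Fin n, i < j → u i = 0 → u j ≠ 1

abbrev Triword (n : ℕ) := {u : Fin n → Fin 3 // IsTriword u}

namespace HLAux

abbrev W (n : ℕ) := Fin n → Fin 3

/-- triword condition without the first-letter constraint -/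
def Tri' {n : ℕ} (w : W n) : Prop := ∀ i j : Fin n, i < j → w i = 0 → w j ≠ 1

/-- no letter equal to 1 -/
def N1 {n : ℕ} (w : W n) : Prop := ∀ j, w j ≠ 1

lemma tri'_of_n1 {n : ℕ} {w : W n} (h : N1 w) : Tri' w := fun _ j _ _ => h j

@[simp] lemma tri'_and_n1 {n : ℕ} (w : W n) : (Tri' w ∧ N1 w) ↔ N1 w :=
  ⟨And.right, fun h => ⟨tri'_of_n1 h, h⟩⟩

lemma tri'_cons {n : ℕ} (x : Fin 3) (w : W n) :
    Tri' (Fin.cons x w) ↔ Tri' w ∧ (x = 0 → N1 w) := by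
  constructor
  · intro h
    refine ⟨fun i j hij h0 => ?_, fun hx j => ?_⟩
    · have := h i.succ j.succ (by simpa using hij) (by simpa using h0)
      simpa using this
    · have := h 0 j.succ (Fin.succ_pos j) (by simpa using hx)
      simpa using this
  · rintro ⟨h1, h2⟩ i j hij h0
    induction j using Fin.cases with
    | zero => exact absurd hij (Fin.not_lt_zero _)
    | succ j' =>
      induction i using Fin.cases with
      | zero =>
        simp only [Fin.cons_zero] at h0
        simpa using h2 h0 j'
      | succ i' =>
        have hij' : i' < j' := by simpa [Fin.succ_lt_succ_iff] using hij
        simp only [Fin.cons_succ] at h0 ⊢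
        exact h1 i' j' hij' h0

lemma n1_cons {n : ℕ} (x : Fin 3) (w : W n) :
    N1 (Fin.cons x w) ↔ x ≠ 1 ∧ N1 w := by
  rw [N1, Fin.forall_fin_succ]
  simp [N1]

lemma isTriword_cons {n : ℕ} (x : Fin 3) (w : W n) :
    IsTriword (Fin.cons x w) ↔ x ≠ 2 ∧ (Tri' w ∧ (x = 0 → N1 w)) := by
  rw [← tri'_cons]
  constructor
  · intro h
    exact ⟨by simpa using h.1 0 rfl, h.2⟩
  · rintro ⟨h1, h2⟩
    refine ⟨fun i hi => ?_, h2⟩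
    have : i = 0 := Fin.ext hi
    subst this
    simpa using h1

lemma cons_le_cons' {n : ℕ} (x y : Fin 3) (u v : W n) :
    (Fin.cons x u : W (n + 1)) ≤ Fin.cons y v ↔ x ≤ y ∧ u ≤ v :=
  Fin.cons_le_cons

noncomputable def cT (n : ℕ) : ℕ :=
  Nat.card {p : W n × W n // Tri' p.1 ∧ Tri' p.2 ∧ p.1 ≤ p.2}
noncomputable def cP (n : ℕ) : ℕ :=
  Nat.card {p : W n × W n // N1 p.1 ∧ Tri' p.2 ∧ p.1 ≤ p.2}
noncomputable def cQ (n : ℕ) : ℕ :=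
  Nat.card {p : W n × W n // N1 p.1 ∧ N1 p.2 ∧ p.1 ≤ p.2}

lemma my_card_sigma {ι : Type*} [Fintype ι] (f : ι → Type*) [∀ i, Finite (f i)] :
    Nat.card (Σ i, f i) = ∑ i, Nat.card (f i) := by
  letI : ∀ i, Fintype (f i) := fun i => Fintype.ofFinite _
  classical
  simp [Nat.card_eq_fintype_card, Fintype.card_sigma]

lemma card_split {n : ℕ} (C : W (n + 1) × W (n + 1) → Prop) :
    Nat.card {p // C p} =
      ∑ xy : Fin 3 × Fin 3,
        Nat.card {p : W n × W n // C (Fin.cons xy.1 p.1, Fin.cons xy.2 p.2)} := by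
  rw [← my_card_sigma]
  apply Nat.card_congr
  exact
    { toFun := fun p => ⟨(p.1.1 0, p.1.2 0),
        (Fin.tail p.1.1, Fin.tail p.1.2), by
          simpa [Fin.cons_self_tail] using p.2⟩
      invFun := fun q => ⟨(Fin.cons q.1.1 q.2.1.1, Fin.cons q.1.2 q.2.1.2), q.2.2⟩
      left_inv := fun p => by
        ext <;> simp [Fin.cons_self_tail]
      right_inv := fun q => by
        refine Sigma.ext (by simp) ?_
        simp [Fin.tail_cons]
        rfl }

lemma card_eq_of_iff {α : Type*} {P Q : α → Prop} (h : ∀ a, P a ↔ Q a) :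
    Nat.card {a // P a} = Nat.card {a // Q a} :=
  Nat.card_congr (Equiv.subtypeEquivRight h)

lemma card_zero_of_false {α : Type*} {P : α → Prop} (h : ∀ a, ¬ P a) :
    Nat.card {a // P a} = 0 := by
  have : IsEmpty {a // P a} := ⟨fun a => h a.1 a.2⟩
  exact Nat.card_of_isEmpty

lemma cQ_succ (n : ℕ) : cQ (n + 1) = 3 * cQ n := by
  rw [cQ, card_split]
  have key : ∀ x y : Fin 3,
      Nat.card {p : W n × W n //
        N1 (Fin.cons x p.1) ∧ N1 (Fin.cons y p.2) ∧ (Fin.cons x p.1 : W (n+1)) ≤ Fin.cons y p.2} =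
      if x ≠ 1 ∧ y ≠ 1 ∧ x ≤ y then cQ n else 0 := by
    intro x y
    split_ifs with h
    · rw [cQ]
      exact card_eq_of_iff fun p => by
        simp [n1_cons, cons_le_cons' , h.1, h.2.1, h.2.2]
    · exact card_zero_of_false fun p hp =>
        h ⟨((n1_cons _ _).mp hp.1).1, ((n1_cons _ _).mp hp.2.1).1,
          ((cons_le_cons' _ _ _ _).mp hp.2.2).1⟩
  rw [Finset.sum_congr rfl (fun xy _ => key xy.1 xy.2)]
  simp only [Fintype.sum_prod_type, Fin.sum_univ_three]
  norm_num
  simp (config := { decide := true })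
  ring

lemma cP_succ (n : ℕ) : cP (n + 1) = 3 * cP n + cQ n := by
  rw [cP, card_split]
  have key : ∀ x y : Fin 3,
      Nat.card {p : W n × W n //
        N1 (Fin.cons x p.1) ∧ Tri' (Fin.cons y p.2) ∧ (Fin.cons x p.1 : W (n+1)) ≤ Fin.cons y p.2} =
      if x ≠ 1 ∧ x ≤ y then (if y = 0 then cQ n else cP n) else 0 := by
    intro x y
    split_ifs with h hy
    · subst hy
      rw [cQ]
      exact card_eq_of_iff fun p => by
        simp [n1_cons, tri'_cons, cons_le_cons' , h.1, h.2]
    · rw [cP]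
      exact card_eq_of_iff fun p => by
        simp [n1_cons, tri'_cons, cons_le_cons' , h.1, h.2, hy]
    · exact card_zero_of_false fun p hp =>
        h ⟨((n1_cons _ _).mp hp.1).1, ((cons_le_cons' _ _ _ _).mp hp.2.2).1⟩
  rw [Finset.sum_congr rfl (fun xy _ => key xy.1 xy.2)]
  simp only [Fintype.sum_prod_type, Fin.sum_univ_three]
  norm_num
  simp (config := { decide := true })
  ring

lemma cT_succ (n : ℕ) : cT (n + 1) = 3 * cT n + 2 * cP n + cQ n := by
  rw [cT, card_split]
  have key : ∀ x y : Fin 3,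
      Nat.card {p : W n × W n //
        Tri' (Fin.cons x p.1) ∧ Tri' (Fin.cons y p.2) ∧ (Fin.cons x p.1 : W (n+1)) ≤ Fin.cons y p.2} =
      if x ≤ y then
        (if x = 0 then (if y = 0 then cQ n else cP n) else cT n) else 0 := by
    intro x y
    split_ifs with h hx hy
    · subst hx; subst hy
      rw [cQ]
      exact card_eq_of_iff fun p => by
        simp [tri'_cons, cons_le_cons' , h]
    · subst hx
      rw [cP]
      exact card_eq_of_iff fun p => by
        simp [tri'_cons, cons_le_cons' , h, hy]
    · rw [cT]
      have hy : y ≠ 0 := fun e => hx (by subst e; exact Fin.le_zero_iff.mp h)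
      exact card_eq_of_iff fun p => by
        simp [tri'_cons, cons_le_cons' , h, hx, hy]
    · exact card_zero_of_false fun p hp =>
        h ((cons_le_cons' _ _ _ _).mp hp.2.2).1
  rw [Finset.sum_congr rfl (fun xy _ => key xy.1 xy.2)]
  simp only [Fintype.sum_prod_type, Fin.sum_univ_three]
  norm_num
  simp (config := { decide := true })
  ring

lemma card_base (P : W 0 × W 0 → Prop) (h : P (Fin.elim0, Fin.elim0)) :
    Nat.card {p // P p} = 1 := by
  haveI : Subsingleton (W 0) := ⟨fun a b => funext fun i => i.elim0⟩
  haveI : Unique {p // P p} :=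
    { default := ⟨(Fin.elim0, Fin.elim0), h⟩
      uniq := fun a => Subtype.ext (Subsingleton.elim _ _) }
  exact Nat.card_unique

lemma cQ_zero : cQ 0 = 1 :=
  card_base _ ⟨fun j => j.elim0, fun j => j.elim0, le_refl _⟩

lemma cP_zero : cP 0 = 1 :=
  card_base _ ⟨fun j => j.elim0, fun _ j _ _ => j.elim0, le_refl _⟩

lemma cT_zero : cT 0 = 1 :=
  card_base _ ⟨fun _ j _ _ => j.elim0, fun _ j _ _ => j.elim0, le_refl _⟩

lemma cQ_eq (n : ℕ) : cQ n = 3 ^ n := by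
  induction n with
  | zero => simp [cQ_zero]
  | succ n ih => rw [cQ_succ, ih, pow_succ]; ring

lemma cP_eq (n : ℕ) : 3 * cP n = 3 ^ n * (n + 3) := by
  induction n with
  | zero => simp [cP_zero]
  | succ n ih =>
    rw [cP_succ, cQ_eq]
    have : 3 * (3 * cP n + 3 ^ n) = 3 * (3 * cP n) + 3 * 3 ^ n := by ring
    rw [this, ih, pow_succ]
    ring

lemma cT_eq (n : ℕ) : 9 * cT n = 3 ^ n * (n ^ 2 + 8 * n + 9) := by
  induction n with
  | zero => simp [cT_zero]
  | succ n ih =>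
    rw [cT_succ, cQ_eq]
    have : 9 * (3 * cT n + 2 * cP n + 3 ^ n) =
        3 * (9 * cT n) + 6 * (3 * cP n) + 9 * 3 ^ n := by ring
    rw [this, ih, cP_eq, pow_succ]
    ring

lemma main_card (n : ℕ) :
    Nat.card {p : Triword (n + 1) × Triword (n + 1) // p.1 ≤ p.2} =
      cQ n + cP n + cT n := by
  have e1 : Nat.card {p : Triword (n + 1) × Triword (n + 1) // p.1 ≤ p.2} =
      Nat.card {p : W (n + 1) × W (n + 1) //
        IsTriword p.1 ∧ IsTriword p.2 ∧ p.1 ≤ p.2} := by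
    apply Nat.card_congr
    exact
      { toFun := fun p => ⟨(p.1.1.1, p.1.2.1), p.1.1.2, p.1.2.2, p.2⟩
        invFun := fun q => ⟨(⟨q.1.1, q.2.1⟩, ⟨q.1.2, q.2.2.1⟩), q.2.2.2⟩
        left_inv := fun p => rfl
        right_inv := fun q => rfl }
  rw [e1, card_split]
  have key : ∀ x y : Fin 3,
      Nat.card {p : W n × W n //
        IsTriword (Fin.cons x p.1) ∧ IsTriword (Fin.cons y p.2) ∧
          (Fin.cons x p.1 : W (n + 1)) ≤ Fin.cons y p.2} =
      if x ≤ y ∧ x ≠ 2 ∧ y ≠ 2 then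
        (if x = 0 then (if y = 0 then cQ n else cP n) else cT n) else 0 := by
    intro x y
    split_ifs with h hx hy
    · subst hx; subst hy
      rw [cQ]
      exact card_eq_of_iff fun p => by
        simp [isTriword_cons, cons_le_cons' , h.1]
    · subst hx
      rw [cP]
      exact card_eq_of_iff fun p => by
        simp [isTriword_cons, cons_le_cons' , h.1, h.2.2, hy]
    · rw [cT]
      have hy : y ≠ 0 := fun e => hx (by subst e; exact Fin.le_zero_iff.mp h.1)
      exact card_eq_of_iff fun p => by
        simp [isTriword_cons, cons_le_cons' , h.1, h.2.1, h.2.2, hx, hy]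
    · exact card_zero_of_false fun p hp =>
        h ⟨((cons_le_cons' _ _ _ _).mp hp.2.2).1,
          ((isTriword_cons _ _).mp hp.1).1, ((isTriword_cons _ _).mp hp.2.1).1⟩
  rw [Finset.sum_congr rfl (fun xy _ => key xy.1 xy.2)]
  simp only [Fintype.sum_prod_type, Fin.sum_univ_three]
  norm_num
  simp (config := { decide := true })

end HLAux

/-- The number of intervals (pairs `u ≼ v`) in the Hochschild lattice of size
`n ≥ 1` is `3^(n-3) (n² + 9n + 17)` (stated multiplied by `27` to avoid
natural subtraction in the exponent). -/
theorem card_intervals (n : ℕ) (hn : 1 ≤ n) :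
    27 * Nat.card {p : Triword n × Triword n // p.1 ≤ p.2} =
      3 ^ n * (n ^ 2 + 9 * n + 17) := by
  obtain ⟨m, rfl⟩ : ∃ m, n = m + 1 := ⟨n - 1, (Nat.succ_pred_eq_of_pos hn).symm⟩
  rw [HLAux.main_card]
  have h : 27 * (HLAux.cQ m + HLAux.cP m + HLAux.cT m) =
      27 * HLAux.cQ m + 9 * (3 * HLAux.cP m) + 3 * (9 * HLAux.cT m) := by ring
  rw [h, HLAux.cQ_eq, HLAux.cP_eq, HLAux.cT_eq, pow_succ]
  ring
end

section
/- The number of 3-chains (triples u ≼ v ≼ w) in the Hochschild lattice of size n ≥ 1 is 4^{n−4} · (n³ + 20n² + 93n + 142). -/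
namespace Hoch

abbrev W (n : ℕ) := Fin n → Fin 3
abbrev F (n : ℕ) := W n × W n × W n
abbrev L := Fin 3 × Fin 3 × Fin 3

def Z {n : ℕ} (u : W n) : Prop := ∃ i, u i = 0

instance {n : ℕ} : DecidablePred (Z (n := n)) :=
  fun u => inferInstanceAs (Decidable (∃ i, u i = 0))

instance {n : ℕ} (u : W n) : Decidable (IsTriword u) :=
  inferInstanceAs (Decidable (_ ∧ _))

instance {n : ℕ} : DecidableRel ((· ≤ ·) : W n → W n → Prop) :=
  fun u v => decidable_of_iff (∀ i, u i ≤ v i) Iff.rfl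

def Ch {n : ℕ} (t : F n) : Prop :=
  IsTriword t.1 ∧ IsTriword t.2.1 ∧ IsTriword t.2.2 ∧ t.1 ≤ t.2.1 ∧ t.2.1 ≤ t.2.2

instance {n : ℕ} : DecidablePred (Ch (n := n)) := fun t =>
  inferInstanceAs (Decidable (_ ∧ _ ∧ _ ∧ _ ∧ _))

/-- append a letter to each of the three words -/
def snoc3 {n : ℕ} (t : F n) (l : L) : F (n + 1) :=
  (Fin.snoc t.1 l.1, Fin.snoc t.2.1 l.2.1, Fin.snoc t.2.2 l.2.2)

lemma triword_snoc {n : ℕ} (hn : 1 ≤ n) (u : W n) (x : Fin 3) :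
    IsTriword (Fin.snoc u x) ↔ IsTriword u ∧ (Z u → x ≠ 1) := by
  constructor
  · rintro ⟨H1, H2⟩
    refine ⟨⟨fun i hi => ?_, fun i j hij h0 => ?_⟩, ?_⟩
    · have := H1 i.castSucc (by simpa using hi)
      simpa using this
    · have := H2 i.castSucc j.castSucc (by simpa using hij) (by simpa using h0)
      simpa using this
    · rintro ⟨i, hi⟩
      have := H2 i.castSucc (Fin.last n) (Fin.castSucc_lt_last i) (by simpa using hi)
      simpa using this
  · rintro ⟨⟨T1, T2⟩, hx⟩
    constructor
    · intro i hi
      rcases Fin.eq_castSucc_or_eq_last i with ⟨j, rfl⟩ | rfl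
      · rw [Fin.snoc_castSucc]; exact T1 j (by simpa using hi)
      · exfalso; rw [Fin.val_last] at hi; omega
    · intro i j hij h0
      rcases Fin.eq_castSucc_or_eq_last j with ⟨j', rfl⟩ | rfl
      · have hi : i ≠ Fin.last n :=
          Fin.ne_last_of_lt (hij.trans (Fin.castSucc_lt_last j'))
        obtain ⟨i', rfl⟩ := Fin.exists_castSucc_eq.mpr hi
        rw [Fin.snoc_castSucc] at h0 ⊢
        exact T2 i' j' (by simpa using hij) h0
      · have hi : i ≠ Fin.last n := Fin.ne_last_of_lt hij
        obtain ⟨i', rfl⟩ := Fin.exists_castSucc_eq.mpr hi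
        rw [Fin.snoc_castSucc] at h0
        rw [Fin.snoc_last]
        exact hx ⟨i', h0⟩

lemma le_snoc {n : ℕ} (u v : W n) (x y : Fin 3) :
    (Fin.snoc u x : W (n+1)) ≤ Fin.snoc v y ↔ u ≤ v ∧ x ≤ y := by
  constructor
  · intro h
    refine ⟨fun i => ?_, ?_⟩
    · have := h i.castSucc; simpa using this
    · have := h (Fin.last n); simpa using this
  · rintro ⟨h1, h2⟩ i
    rcases Fin.eq_castSucc_or_eq_last i with ⟨j, rfl⟩ | rfl
    · simpa using h1 j
    · simpa using h2

lemma Z_snoc {n : ℕ} (u : W n) (x : Fin 3) :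
    Z (Fin.snoc u x) ↔ Z u ∨ x = 0 := by
  constructor
  · rintro ⟨i, hi⟩
    rcases Fin.eq_castSucc_or_eq_last i with ⟨j, rfl⟩ | rfl
    · left; exact ⟨j, by simpa using hi⟩
    · right; simpa using hi
  · rintro (⟨i, hi⟩ | h)
    · exact ⟨i.castSucc, by simpa using hi⟩
    · exact ⟨Fin.last n, by simpa using h⟩

/-- letter-level admissibility -/
def Adm {n : ℕ} (t : F n) (l : L) : Prop :=
  l.1 ≤ l.2.1 ∧ l.2.1 ≤ l.2.2 ∧ (Z t.1 → l.1 ≠ 1) ∧ (Z t.2.1 → l.2.1 ≠ 1) ∧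
    (Z t.2.2 → l.2.2 ≠ 1)

instance {n : ℕ} (t : F n) : DecidablePred (Adm t) := fun l =>
  inferInstanceAs (Decidable (_ ∧ _ ∧ _ ∧ _ ∧ _))

lemma ch_snoc {n : ℕ} (hn : 1 ≤ n) (t : F n) (l : L) :
    Ch (snoc3 t l) ↔ Ch t ∧ Adm t l := by
  obtain ⟨u, v, w⟩ := t
  obtain ⟨x, y, z⟩ := l
  simp only [Ch, Adm, snoc3, triword_snoc hn, le_snoc]
  tauto

end Hoch

namespace Hoch
open Finset

variable {n : ℕ}

/-- counts of chain-triples by state -/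
def a (n : ℕ) : ℕ := (univ.filter fun t : F n => Ch t ∧ ¬Z t.1).card
def b (n : ℕ) : ℕ := (univ.filter fun t : F n => (Ch t ∧ Z t.1) ∧ ¬Z t.2.1).card
def c (n : ℕ) : ℕ :=
  (univ.filter fun t : F n => ((Ch t ∧ Z t.1) ∧ Z t.2.1) ∧ ¬Z t.2.2).card
def d (n : ℕ) : ℕ :=
  (univ.filter fun t : F n => ((Ch t ∧ Z t.1) ∧ Z t.2.1) ∧ Z t.2.2).card

lemma chZ1 {t : F n} (h : Ch t) : Z t.2.1 → Z t.1 := by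
  rintro ⟨i, hi⟩
  exact ⟨i, Fin.le_zero_iff.mp (hi ▸ h.2.2.2.1 i)⟩

lemma chZ2 {t : F n} (h : Ch t) : Z t.2.2 → Z t.2.1 := by
  rintro ⟨i, hi⟩
  exact ⟨i, Fin.le_zero_iff.mp (hi ▸ h.2.2.2.2 i)⟩

def chop (q : F (n + 1)) : F n × L :=
  ((Fin.init q.1, Fin.init q.2.1, Fin.init q.2.2),
    (q.1 (Fin.last n), q.2.1 (Fin.last n), q.2.2 (Fin.last n)))

lemma snoc3_eta (q : F (n + 1)) : snoc3 (chop q).1 (chop q).2 = q := by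
  simp [snoc3, chop, Fin.snoc_init_self]

lemma chop_snoc3 (t : F n) (l : L) : chop (snoc3 t l) = (t, l) := by
  obtain ⟨u, v, w⟩ := t; obtain ⟨x, y, z⟩ := l
  simp [snoc3, chop, Fin.init_snoc, Fin.snoc_last]

lemma card_filter_snoc (P : F (n + 1) → Prop) [DecidablePred P]
    (R : F n → L → Prop) [∀ t, DecidablePred (R t)]
    (h : ∀ t l, P (snoc3 t l) ↔ Ch t ∧ R t l) :
    (univ.filter P).card =
      ∑ t ∈ univ.filter (Ch (n := n)), (univ.filter (R t)).card := by
  have hQ : (univ.filter P).card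
      = (univ.filter (fun p : F n × L => Ch p.1 ∧ R p.1 p.2)).card := by
    apply Finset.card_bij (fun q _ => chop q)
    · intro q hq
      simp only [mem_filter, mem_univ, true_and] at hq ⊢
      rw [← h]
      rwa [snoc3_eta q]
    · intro q1 h1 q2 h2 he
      have := congrArg (fun p : F n × L => snoc3 p.1 p.2) he
      simpa only [snoc3_eta] using this
    · intro p hp
      simp only [mem_filter, mem_univ, true_and] at hp
      refine ⟨snoc3 p.1 p.2, ?_, ?_⟩
      · simp only [mem_filter, mem_univ, true_and]
        exact (h p.1 p.2).mpr hp
      · exact chop_snoc3 p.1 p.2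
  rw [hQ, Finset.card_filter, Fintype.sum_prod_type]
  have key : ∀ t : F n, (∑ l : L, if Ch t ∧ R t l then 1 else 0)
      = if Ch t then (univ.filter (R t)).card else 0 := by
    intro t
    by_cases hc : Ch t
    · rw [if_pos hc, Finset.card_filter]
      exact Finset.sum_congr rfl fun l _ => by simp only [hc, true_and]
    · rw [if_neg hc]
      exact Finset.sum_eq_zero fun l _ => by simp [hc]
  rw [Finset.sum_congr rfl fun t _ => key t, Finset.sum_filter]

lemma sum_classes (g : F n → ℕ) (m0 m1 m2 m3 : ℕ)
    (h0 : ∀ t : F n, Ch t → ¬Z t.1 → g t = m0)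
    (h1 : ∀ t : F n, Ch t → Z t.1 → ¬Z t.2.1 → g t = m1)
    (h2 : ∀ t : F n, Ch t → Z t.2.1 → ¬Z t.2.2 → g t = m2)
    (h3 : ∀ t : F n, Ch t → Z t.2.2 → g t = m3) :
    ∑ t ∈ univ.filter (Ch (n := n)), g t =
      m0 * a n + m1 * b n + m2 * c n + m3 * d n := by
  rw [← Finset.sum_filter_add_sum_filter_not (univ.filter (Ch (n := n)))
    (fun t => Z t.1) g]
  rw [← Finset.sum_filter_add_sum_filter_not
    ((univ.filter (Ch (n := n))).filter (fun t => Z t.1)) (fun t => Z t.2.1) g]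
  rw [← Finset.sum_filter_add_sum_filter_not
    (((univ.filter (Ch (n := n))).filter (fun t => Z t.1)).filter
      (fun t => Z t.2.1)) (fun t => Z t.2.2) g]
  simp only [Finset.filter_filter]
  have e0 : ∑ t ∈ univ.filter (fun t : F n => Ch t ∧ ¬Z t.1), g t
      = m0 * a n := by
    rw [Finset.sum_congr rfl (fun t ht => by
      simp only [mem_filter, mem_univ, true_and] at ht
      exact h0 t ht.1 ht.2), Finset.sum_const, a, smul_eq_mul, mul_comm]
  have e1 : ∑ t ∈ univ.filter (fun t : F n => (Ch t ∧ Z t.1) ∧ ¬Z t.2.1), g t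
      = m1 * b n := by
    rw [Finset.sum_congr rfl (fun t ht => by
      simp only [mem_filter, mem_univ, true_and] at ht
      exact h1 t ht.1.1 ht.1.2 ht.2), Finset.sum_const, b, smul_eq_mul, mul_comm]
  have e2 : ∑ t ∈ univ.filter
      (fun t : F n => ((Ch t ∧ Z t.1) ∧ Z t.2.1) ∧ ¬Z t.2.2), g t = m2 * c n := by
    rw [Finset.sum_congr rfl (fun t ht => by
      simp only [mem_filter, mem_univ, true_and] at ht
      exact h2 t ht.1.1.1 ht.1.2 ht.2), Finset.sum_const, c, smul_eq_mul, mul_comm]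
  have e3 : ∑ t ∈ univ.filter
      (fun t : F n => ((Ch t ∧ Z t.1) ∧ Z t.2.1) ∧ Z t.2.2), g t = m3 * d n := by
    rw [Finset.sum_congr rfl (fun t ht => by
      simp only [mem_filter, mem_univ, true_and] at ht
      exact h3 t ht.1.1.1 ht.2), Finset.sum_const, d, smul_eq_mul, mul_comm]
  rw [e0, e1, e2, e3]
  ring

end Hoch
namespace Hoch
open Finset

variable {n : ℕ}

lemma a_succ (hn : 1 ≤ n) : a (n + 1) = 4 * a n := by
  have h : ∀ (t : F n) (l : L), (Ch (snoc3 t l) ∧ ¬Z (snoc3 t l).1) ↔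
      Ch t ∧ (Adm t l ∧ ¬(Z t.1 ∨ l.1 = 0)) := by
    intro t l
    rw [ch_snoc hn, show (snoc3 t l).1 = Fin.snoc t.1 l.1 from rfl, Z_snoc]
    tauto
  have step : a (n + 1) =
      ∑ t ∈ univ.filter (Ch (n := n)),
        (univ.filter (fun l : L => Adm t l ∧ ¬(Z t.1 ∨ l.1 = 0))).card :=
    card_filter_snoc _ _ h
  have h0 : ∀ t : F n, Ch t → ¬Z t.1 →
      (univ.filter (fun l : L => Adm t l ∧ ¬(Z t.1 ∨ l.1 = 0))).card = 4 := by
    intro t hch hz0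
    have hz1 : ¬Z t.2.1 := fun hh => hz0 (chZ1 hch hh)
    have hz2 : ¬Z t.2.2 := fun hh => hz1 (chZ2 hch hh)
    have e : univ.filter (fun l : L => Adm t l ∧ ¬(Z t.1 ∨ l.1 = 0)) =
        univ.filter (fun l : L => (l.1 ≤ l.2.1 ∧ l.2.1 ≤ l.2.2) ∧ l.1 ≠ 0) := by
      ext l
      simp only [mem_filter, mem_univ, true_and]; simp only [Adm]
      constructor <;> intro hl <;> tauto
    rw [e]; decide
  have hz : ∀ t : F n, Z t.1 →
      (univ.filter (fun l : L => Adm t l ∧ ¬(Z t.1 ∨ l.1 = 0))).card = 0 := by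
    intro t hz0
    have e : univ.filter (fun l : L => Adm t l ∧ ¬(Z t.1 ∨ l.1 = 0)) =
        univ.filter (fun _ : L => False) := by
      ext l
      simp only [mem_filter, mem_univ, true_and]; simp only [Adm]
      constructor <;> intro hl <;> tauto
    rw [e]; decide
  rw [step, sum_classes _ 4 0 0 0 h0 (fun t hch h1 _ => hz t h1)
    (fun t hch h1 _ => hz t (chZ1 hch h1))
    (fun t hch h1 => hz t (chZ1 hch (chZ2 hch h1)))]
  ring

lemma b_succ (hn : 1 ≤ n) : b (n + 1) = 3 * a n + 4 * b n := by
  have h : ∀ (t : F n) (l : L),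
      ((Ch (snoc3 t l) ∧ Z (snoc3 t l).1) ∧ ¬Z (snoc3 t l).2.1) ↔
      Ch t ∧ (Adm t l ∧ ((Z t.1 ∨ l.1 = 0) ∧ ¬(Z t.2.1 ∨ l.2.1 = 0))) := by
    intro t l
    rw [ch_snoc hn, show (snoc3 t l).1 = Fin.snoc t.1 l.1 from rfl,
      show (snoc3 t l).2.1 = Fin.snoc t.2.1 l.2.1 from rfl, Z_snoc, Z_snoc]
    tauto
  have step : b (n + 1) =
      ∑ t ∈ univ.filter (Ch (n := n)),
        (univ.filter (fun l : L =>
          Adm t l ∧ ((Z t.1 ∨ l.1 = 0) ∧ ¬(Z t.2.1 ∨ l.2.1 = 0)))).card :=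
    card_filter_snoc _ _ h
  have h0 : ∀ t : F n, Ch t → ¬Z t.1 →
      (univ.filter (fun l : L =>
        Adm t l ∧ ((Z t.1 ∨ l.1 = 0) ∧ ¬(Z t.2.1 ∨ l.2.1 = 0)))).card = 3 := by
    intro t hch hz0
    have hz1 : ¬Z t.2.1 := fun hh => hz0 (chZ1 hch hh)
    have hz2 : ¬Z t.2.2 := fun hh => hz1 (chZ2 hch hh)
    have e : univ.filter (fun l : L =>
          Adm t l ∧ ((Z t.1 ∨ l.1 = 0) ∧ ¬(Z t.2.1 ∨ l.2.1 = 0))) =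
        univ.filter (fun l : L =>
          (l.1 ≤ l.2.1 ∧ l.2.1 ≤ l.2.2) ∧ l.1 = 0 ∧ l.2.1 ≠ 0) := by
      ext l
      simp only [mem_filter, mem_univ, true_and]; simp only [Adm]
      constructor <;> intro hl <;> tauto
    rw [e]; decide
  have h1 : ∀ t : F n, Ch t → Z t.1 → ¬Z t.2.1 →
      (univ.filter (fun l : L =>
        Adm t l ∧ ((Z t.1 ∨ l.1 = 0) ∧ ¬(Z t.2.1 ∨ l.2.1 = 0)))).card = 4 := by
    intro t hch hz0 hz1
    have hz2 : ¬Z t.2.2 := fun hh => hz1 (chZ2 hch hh)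
    have e : univ.filter (fun l : L =>
          Adm t l ∧ ((Z t.1 ∨ l.1 = 0) ∧ ¬(Z t.2.1 ∨ l.2.1 = 0))) =
        univ.filter (fun l : L =>
          (l.1 ≤ l.2.1 ∧ l.2.1 ≤ l.2.2) ∧ l.1 ≠ 1 ∧ l.2.1 ≠ 0) := by
      ext l
      simp only [mem_filter, mem_univ, true_and]; simp only [Adm]
      constructor <;> intro hl <;> tauto
    rw [e]; decide
  have hzz : ∀ t : F n, Z t.2.1 →
      (univ.filter (fun l : L =>
        Adm t l ∧ ((Z t.1 ∨ l.1 = 0) ∧ ¬(Z t.2.1 ∨ l.2.1 = 0)))).card = 0 := by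
    intro t hv
    have e : univ.filter (fun l : L =>
          Adm t l ∧ ((Z t.1 ∨ l.1 = 0) ∧ ¬(Z t.2.1 ∨ l.2.1 = 0))) =
        univ.filter (fun _ : L => False) := by
      ext l
      simp only [mem_filter, mem_univ, true_and]; simp only [Adm]
      constructor <;> intro hl <;> tauto
    rw [e]; decide
  rw [step, sum_classes _ 3 4 0 0 h0 h1 (fun t hch h1' _ => hzz t h1')
    (fun t hch h1' => hzz t (chZ2 hch h1'))]
  ring

lemma c_succ (hn : 1 ≤ n) : c (n + 1) = 2 * a n + 2 * b n + 4 * c n := by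
  have h : ∀ (t : F n) (l : L),
      (((Ch (snoc3 t l) ∧ Z (snoc3 t l).1) ∧ Z (snoc3 t l).2.1) ∧
        ¬Z (snoc3 t l).2.2) ↔
      Ch t ∧ (Adm t l ∧ ((Z t.1 ∨ l.1 = 0) ∧ (Z t.2.1 ∨ l.2.1 = 0) ∧
        ¬(Z t.2.2 ∨ l.2.2 = 0))) := by
    intro t l
    rw [ch_snoc hn, show (snoc3 t l).1 = Fin.snoc t.1 l.1 from rfl,
      show (snoc3 t l).2.1 = Fin.snoc t.2.1 l.2.1 from rfl,
      show (snoc3 t l).2.2 = Fin.snoc t.2.2 l.2.2 from rfl, Z_snoc, Z_snoc, Z_snoc]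
    tauto
  have step : c (n + 1) =
      ∑ t ∈ univ.filter (Ch (n := n)),
        (univ.filter (fun l : L =>
          Adm t l ∧ ((Z t.1 ∨ l.1 = 0) ∧ (Z t.2.1 ∨ l.2.1 = 0) ∧
            ¬(Z t.2.2 ∨ l.2.2 = 0)))).card :=
    card_filter_snoc _ _ h
  have h0 : ∀ t : F n, Ch t → ¬Z t.1 →
      (univ.filter (fun l : L =>
        Adm t l ∧ ((Z t.1 ∨ l.1 = 0) ∧ (Z t.2.1 ∨ l.2.1 = 0) ∧
          ¬(Z t.2.2 ∨ l.2.2 = 0)))).card = 2 := by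
    intro t hch hz0
    have hz1 : ¬Z t.2.1 := fun hh => hz0 (chZ1 hch hh)
    have hz2 : ¬Z t.2.2 := fun hh => hz1 (chZ2 hch hh)
    have e : univ.filter (fun l : L =>
          Adm t l ∧ ((Z t.1 ∨ l.1 = 0) ∧ (Z t.2.1 ∨ l.2.1 = 0) ∧
            ¬(Z t.2.2 ∨ l.2.2 = 0))) =
        univ.filter (fun l : L =>
          (l.1 ≤ l.2.1 ∧ l.2.1 ≤ l.2.2) ∧ l.1 = 0 ∧ l.2.1 = 0 ∧ l.2.2 ≠ 0) := by
      ext l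
      simp only [mem_filter, mem_univ, true_and]; simp only [Adm]
      constructor <;> intro hl <;> tauto
    rw [e]; decide
  have h1 : ∀ t : F n, Ch t → Z t.1 → ¬Z t.2.1 →
      (univ.filter (fun l : L =>
        Adm t l ∧ ((Z t.1 ∨ l.1 = 0) ∧ (Z t.2.1 ∨ l.2.1 = 0) ∧
          ¬(Z t.2.2 ∨ l.2.2 = 0)))).card = 2 := by
    intro t hch hz0 hz1
    have hz2 : ¬Z t.2.2 := fun hh => hz1 (chZ2 hch hh)
    have e : univ.filter (fun l : L =>
          Adm t l ∧ ((Z t.1 ∨ l.1 = 0) ∧ (Z t.2.1 ∨ l.2.1 = 0) ∧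
            ¬(Z t.2.2 ∨ l.2.2 = 0))) =
        univ.filter (fun l : L =>
          (l.1 ≤ l.2.1 ∧ l.2.1 ≤ l.2.2) ∧ l.1 ≠ 1 ∧ l.2.1 = 0 ∧ l.2.2 ≠ 0) := by
      ext l
      simp only [mem_filter, mem_univ, true_and]; simp only [Adm]
      constructor <;> intro hl <;> tauto
    rw [e]; decide
  have h2 : ∀ t : F n, Ch t → Z t.2.1 → ¬Z t.2.2 →
      (univ.filter (fun l : L =>
        Adm t l ∧ ((Z t.1 ∨ l.1 = 0) ∧ (Z t.2.1 ∨ l.2.1 = 0) ∧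
          ¬(Z t.2.2 ∨ l.2.2 = 0)))).card = 4 := by
    intro t hch hz1 hz2
    have hz0 : Z t.1 := chZ1 hch hz1
    have e : univ.filter (fun l : L =>
          Adm t l ∧ ((Z t.1 ∨ l.1 = 0) ∧ (Z t.2.1 ∨ l.2.1 = 0) ∧
            ¬(Z t.2.2 ∨ l.2.2 = 0))) =
        univ.filter (fun l : L =>
          (l.1 ≤ l.2.1 ∧ l.2.1 ≤ l.2.2) ∧ l.1 ≠ 1 ∧ l.2.1 ≠ 1 ∧ l.2.2 ≠ 0) := by
      ext l
      simp only [mem_filter, mem_univ, true_and]; simp only [Adm]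
      constructor <;> intro hl <;> tauto
    rw [e]; decide
  have h3 : ∀ t : F n, Ch t → Z t.2.2 →
      (univ.filter (fun l : L =>
        Adm t l ∧ ((Z t.1 ∨ l.1 = 0) ∧ (Z t.2.1 ∨ l.2.1 = 0) ∧
          ¬(Z t.2.2 ∨ l.2.2 = 0)))).card = 0 := by
    intro t hch hz2
    have e : univ.filter (fun l : L =>
          Adm t l ∧ ((Z t.1 ∨ l.1 = 0) ∧ (Z t.2.1 ∨ l.2.1 = 0) ∧
            ¬(Z t.2.2 ∨ l.2.2 = 0))) =
        univ.filter (fun _ : L => False) := by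
      ext l
      simp only [mem_filter, mem_univ, true_and]; simp only [Adm]
      constructor <;> intro hl <;> tauto
    rw [e]; decide
  rw [step, sum_classes _ 2 2 4 0 h0 h1 h2 h3]
  ring

lemma d_succ (hn : 1 ≤ n) : d (n + 1) = a n + b n + c n + 4 * d n := by
  have h : ∀ (t : F n) (l : L),
      (((Ch (snoc3 t l) ∧ Z (snoc3 t l).1) ∧ Z (snoc3 t l).2.1) ∧
        Z (snoc3 t l).2.2) ↔
      Ch t ∧ (Adm t l ∧ ((Z t.1 ∨ l.1 = 0) ∧ (Z t.2.1 ∨ l.2.1 = 0) ∧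
        (Z t.2.2 ∨ l.2.2 = 0))) := by
    intro t l
    rw [ch_snoc hn, show (snoc3 t l).1 = Fin.snoc t.1 l.1 from rfl,
      show (snoc3 t l).2.1 = Fin.snoc t.2.1 l.2.1 from rfl,
      show (snoc3 t l).2.2 = Fin.snoc t.2.2 l.2.2 from rfl, Z_snoc, Z_snoc, Z_snoc]
    tauto
  have step : d (n + 1) =
      ∑ t ∈ univ.filter (Ch (n := n)),
        (univ.filter (fun l : L =>
          Adm t l ∧ ((Z t.1 ∨ l.1 = 0) ∧ (Z t.2.1 ∨ l.2.1 = 0) ∧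
            (Z t.2.2 ∨ l.2.2 = 0)))).card :=
    card_filter_snoc _ _ h
  have h0 : ∀ t : F n, Ch t → ¬Z t.1 →
      (univ.filter (fun l : L =>
        Adm t l ∧ ((Z t.1 ∨ l.1 = 0) ∧ (Z t.2.1 ∨ l.2.1 = 0) ∧
          (Z t.2.2 ∨ l.2.2 = 0)))).card = 1 := by
    intro t hch hz0
    have hz1 : ¬Z t.2.1 := fun hh => hz0 (chZ1 hch hh)
    have hz2 : ¬Z t.2.2 := fun hh => hz1 (chZ2 hch hh)
    have e : univ.filter (fun l : L =>
          Adm t l ∧ ((Z t.1 ∨ l.1 = 0) ∧ (Z t.2.1 ∨ l.2.1 = 0) ∧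
            (Z t.2.2 ∨ l.2.2 = 0))) =
        univ.filter (fun l : L =>
          (l.1 ≤ l.2.1 ∧ l.2.1 ≤ l.2.2) ∧ l.1 = 0 ∧ l.2.1 = 0 ∧ l.2.2 = 0) := by
      ext l
      simp only [mem_filter, mem_univ, true_and]; simp only [Adm]
      constructor <;> intro hl <;> tauto
    rw [e]; decide
  have h1 : ∀ t : F n, Ch t → Z t.1 → ¬Z t.2.1 →
      (univ.filter (fun l : L =>
        Adm t l ∧ ((Z t.1 ∨ l.1 = 0) ∧ (Z t.2.1 ∨ l.2.1 = 0) ∧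
          (Z t.2.2 ∨ l.2.2 = 0)))).card = 1 := by
    intro t hch hz0 hz1
    have hz2 : ¬Z t.2.2 := fun hh => hz1 (chZ2 hch hh)
    have e : univ.filter (fun l : L =>
          Adm t l ∧ ((Z t.1 ∨ l.1 = 0) ∧ (Z t.2.1 ∨ l.2.1 = 0) ∧
            (Z t.2.2 ∨ l.2.2 = 0))) =
        univ.filter (fun l : L =>
          (l.1 ≤ l.2.1 ∧ l.2.1 ≤ l.2.2) ∧ l.1 ≠ 1 ∧ l.2.1 = 0 ∧ l.2.2 = 0) := by
      ext l
      simp only [mem_filter, mem_univ, true_and]; simp only [Adm]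
      constructor <;> intro hl <;> tauto
    rw [e]; decide
  have h2 : ∀ t : F n, Ch t → Z t.2.1 → ¬Z t.2.2 →
      (univ.filter (fun l : L =>
        Adm t l ∧ ((Z t.1 ∨ l.1 = 0) ∧ (Z t.2.1 ∨ l.2.1 = 0) ∧
          (Z t.2.2 ∨ l.2.2 = 0)))).card = 1 := by
    intro t hch hz1 hz2
    have hz0 : Z t.1 := chZ1 hch hz1
    have e : univ.filter (fun l : L =>
          Adm t l ∧ ((Z t.1 ∨ l.1 = 0) ∧ (Z t.2.1 ∨ l.2.1 = 0) ∧
            (Z t.2.2 ∨ l.2.2 = 0))) =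
        univ.filter (fun l : L =>
          (l.1 ≤ l.2.1 ∧ l.2.1 ≤ l.2.2) ∧ l.1 ≠ 1 ∧ l.2.1 ≠ 1 ∧ l.2.2 = 0) := by
      ext l
      simp only [mem_filter, mem_univ, true_and]; simp only [Adm]
      constructor <;> intro hl <;> tauto
    rw [e]; decide
  have h3 : ∀ t : F n, Ch t → Z t.2.2 →
      (univ.filter (fun l : L =>
        Adm t l ∧ ((Z t.1 ∨ l.1 = 0) ∧ (Z t.2.1 ∨ l.2.1 = 0) ∧
          (Z t.2.2 ∨ l.2.2 = 0)))).card = 4 := by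
    intro t hch hz2
    have hz1 : Z t.2.1 := chZ2 hch hz2
    have hz0 : Z t.1 := chZ1 hch hz1
    have e : univ.filter (fun l : L =>
          Adm t l ∧ ((Z t.1 ∨ l.1 = 0) ∧ (Z t.2.1 ∨ l.2.1 = 0) ∧
            (Z t.2.2 ∨ l.2.2 = 0))) =
        univ.filter (fun l : L =>
          (l.1 ≤ l.2.1 ∧ l.2.1 ≤ l.2.2) ∧ l.1 ≠ 1 ∧ l.2.1 ≠ 1 ∧ l.2.2 ≠ 1) := by
      ext l
      simp only [mem_filter, mem_univ, true_and]; simp only [Adm]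
      constructor <;> intro hl <;> tauto
    rw [e]; decide
  rw [step, sum_classes _ 1 1 1 4 h0 h1 h2 h3]
  ring

end Hoch
namespace Hoch
open Finset

variable {n : ℕ}

lemma isTriword_one (u : W 1) : IsTriword u ↔ u 0 ≠ 2 := by
  constructor
  · exact fun h => h.1 0 rfl
  · intro h
    refine ⟨fun i hi => by rw [Subsingleton.elim i 0]; exact h,
      fun i j hij => absurd hij ?_⟩
    rw [Subsingleton.elim i j]
    exact lt_irrefl j

lemma Z_one (u : W 1) : Z u ↔ u 0 = 0 :=
  ⟨fun ⟨i, hi⟩ => by rwa [Subsingleton.elim 0 i], fun h => ⟨0, h⟩⟩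

lemma le_one (u v : W 1) : u ≤ v ↔ u 0 ≤ v 0 :=
  ⟨fun h => h 0, fun h i => by rw [Subsingleton.elim i 0]; exact h⟩

lemma card_one (p : F 1 → Prop) [DecidablePred p] (q : L → Prop) [DecidablePred q]
    (h : ∀ t : F 1, p t ↔ q (t.1 0, t.2.1 0, t.2.2 0)) :
    (univ.filter p).card = (univ.filter q).card := by
  apply Finset.card_bij (fun (t : F 1) _ => ((t.1 0, t.2.1 0, t.2.2 0) : L))
  · intro t ht
    simp only [mem_filter, mem_univ, true_and] at ht ⊢
    exact (h t).mp ht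
  · intro t1 h1 t2 h2 he
    obtain ⟨u1, v1, w1⟩ := t1
    obtain ⟨u2, v2, w2⟩ := t2
    simp only [Prod.mk.injEq] at he ⊢
    obtain ⟨e1, e2, e3⟩ := he
    refine ⟨funext fun i => ?_, funext fun i => ?_, funext fun i => ?_⟩ <;>
      rw [Subsingleton.elim i 0]
    exacts [e1, e2, e3]
  · intro l hl
    refine ⟨((fun _ => l.1 : W 1), (fun _ => l.2.1 : W 1), (fun _ => l.2.2 : W 1)),
      ?_, rfl⟩
    simp only [mem_filter, mem_univ, true_and] at hl ⊢
    exact (h _).mpr hl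

lemma chQ_one (t : F 1) : (Ch t) ↔
    ((fun l : L => l.1 ≠ 2 ∧ l.2.1 ≠ 2 ∧ l.2.2 ≠ 2 ∧ l.1 ≤ l.2.1 ∧ l.2.1 ≤ l.2.2)
      (t.1 0, t.2.1 0, t.2.2 0)) := by
  simp only [Ch, isTriword_one, le_one]

lemma a_one : a 1 = 1 := by
  have e : a 1 = (univ.filter (fun l : L =>
      (l.1 ≠ 2 ∧ l.2.1 ≠ 2 ∧ l.2.2 ≠ 2 ∧ l.1 ≤ l.2.1 ∧ l.2.1 ≤ l.2.2) ∧
        ¬(l.1 = 0))).card :=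
    card_one _ _ (fun t => by rw [and_congr (chQ_one t) (not_congr (Z_one t.1))])
  rw [e]; decide

lemma b_one : b 1 = 1 := by
  have e : b 1 = (univ.filter (fun l : L =>
      ((l.1 ≠ 2 ∧ l.2.1 ≠ 2 ∧ l.2.2 ≠ 2 ∧ l.1 ≤ l.2.1 ∧ l.2.1 ≤ l.2.2) ∧
        l.1 = 0) ∧ ¬(l.2.1 = 0))).card :=
    card_one _ _ (fun t => by
      rw [and_congr (and_congr (chQ_one t) (Z_one t.1)) (not_congr (Z_one t.2.1))])
  rw [e]; decide

lemma c_one : c 1 = 1 := by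
  have e : c 1 = (univ.filter (fun l : L =>
      (((l.1 ≠ 2 ∧ l.2.1 ≠ 2 ∧ l.2.2 ≠ 2 ∧ l.1 ≤ l.2.1 ∧ l.2.1 ≤ l.2.2) ∧
        l.1 = 0) ∧ l.2.1 = 0) ∧ ¬(l.2.2 = 0))).card :=
    card_one _ _ (fun t => by
      rw [and_congr (and_congr (and_congr (chQ_one t) (Z_one t.1)) (Z_one t.2.1))
        (not_congr (Z_one t.2.2))])
  rw [e]; decide

lemma d_one : d 1 = 1 := by
  have e : d 1 = (univ.filter (fun l : L =>
      (((l.1 ≠ 2 ∧ l.2.1 ≠ 2 ∧ l.2.2 ≠ 2 ∧ l.1 ≤ l.2.1 ∧ l.2.1 ≤ l.2.2) ∧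
        l.1 = 0) ∧ l.2.1 = 0) ∧ l.2.2 = 0)).card :=
    card_one _ _ (fun t => by
      rw [and_congr (and_congr (and_congr (chQ_one t) (Z_one t.1)) (Z_one t.2.1))
        (Z_one t.2.2)])
  rw [e]; decide

lemma main (n : ℕ) (hn : 1 ≤ n) :
    4 * a n = 4 ^ n ∧ 16 * b n = 4 ^ n * (3 * n + 1) ∧
    64 * c n = 4 ^ n * (3 * n ^ 2 + 7 * n + 6) ∧
    256 * d n = 4 ^ n * (n ^ 3 + 8 * n ^ 2 + 17 * n + 38) := by
  induction n, hn using Nat.le_induction with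
  | base => rw [a_one, b_one, c_one, d_one]; norm_num
  | succ m hm ih =>
    obtain ⟨ha, hb, hc, hd⟩ := ih
    refine ⟨?_, ?_, ?_, ?_⟩
    · rw [a_succ hm, pow_succ]
      calc 4 * (4 * a m) = 4 * (4 * a m) := rfl
      _ = (4 * a m) * 4 := by ring
      _ = 4 ^ m * 4 := by rw [ha]
    · rw [b_succ hm, pow_succ]
      calc 16 * (3 * a m + 4 * b m) = 12 * (4 * a m) + 4 * (16 * b m) := by ring
      _ = 12 * 4 ^ m + 4 * (4 ^ m * (3 * m + 1)) := by rw [ha, hb]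
      _ = 4 ^ m * 4 * (3 * (m + 1) + 1) := by ring
    · rw [c_succ hm, pow_succ]
      calc 64 * (2 * a m + 2 * b m + 4 * c m)
          = 32 * (4 * a m) + 8 * (16 * b m) + 4 * (64 * c m) := by ring
      _ = 32 * 4 ^ m + 8 * (4 ^ m * (3 * m + 1)) +
          4 * (4 ^ m * (3 * m ^ 2 + 7 * m + 6)) := by rw [ha, hb, hc]
      _ = 4 ^ m * 4 * (3 * (m + 1) ^ 2 + 7 * (m + 1) + 6) := by ring
    · rw [d_succ hm, pow_succ]
      calc 256 * (a m + b m + c m + 4 * d m)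
          = 64 * (4 * a m) + 16 * (16 * b m) + 4 * (64 * c m) +
            4 * (256 * d m) := by ring
      _ = 64 * 4 ^ m + 16 * (4 ^ m * (3 * m + 1)) +
          4 * (4 ^ m * (3 * m ^ 2 + 7 * m + 6)) +
          4 * (4 ^ m * (m ^ 3 + 8 * m ^ 2 + 17 * m + 38)) := by rw [ha, hb, hc, hd]
      _ = 4 ^ m * 4 * ((m + 1) ^ 3 + 8 * (m + 1) ^ 2 + 17 * (m + 1) + 38) := by
          ring
    
lemma total (n : ℕ) : (univ.filter (Ch (n := n))).card = a n + b n + c n + d n := by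
  have h := sum_classes (n := n) (fun _ => 1) 1 1 1 1
    (fun _ _ _ => rfl) (fun _ _ _ _ => rfl) (fun _ _ _ _ => rfl) (fun _ _ _ => rfl)
  simpa using h

def chainEquiv (n : ℕ) :
    {t : Triword n × Triword n × Triword n // t.1 ≤ t.2.1 ∧ t.2.1 ≤ t.2.2} ≃
      {t : F n // Ch t} where
  toFun x := ⟨(x.1.1.1, x.1.2.1.1, x.1.2.2.1),
    x.1.1.2, x.1.2.1.2, x.1.2.2.2, x.2.1, x.2.2⟩
  invFun y := ⟨(⟨y.1.1, y.2.1⟩, ⟨y.1.2.1, y.2.2.1⟩, ⟨y.1.2.2, y.2.2.2.1⟩),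
    y.2.2.2.2.1, y.2.2.2.2.2⟩
  left_inv x := rfl
  right_inv y := rfl

end Hoch

/-- The number of 3-chains (triples `u ≼ v ≼ w`) in the Hochschild lattice of
size `n ≥ 1` is `4^(n-4) (n³ + 20n² + 93n + 142)` (stated multiplied by `256`
to avoid natural subtraction in the exponent). -/
theorem card_three_chains (n : ℕ) (hn : 1 ≤ n) :
    256 * Nat.card {t : Triword n × Triword n × Triword n //
        t.1 ≤ t.2.1 ∧ t.2.1 ≤ t.2.2} =
      4 ^ n * (n ^ 3 + 20 * n ^ 2 + 93 * n + 142) := by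
  open Hoch in
  have hcard : Nat.card {t : Triword n × Triword n × Triword n //
      t.1 ≤ t.2.1 ∧ t.2.1 ≤ t.2.2} =
      (Finset.univ.filter (Hoch.Ch (n := n))).card := by
    rw [Nat.card_congr (Hoch.chainEquiv n), Nat.card_eq_fintype_card,
      Fintype.card_subtype]
  obtain ⟨ha, hb, hc, hd⟩ := Hoch.main n hn
  rw [hcard, Hoch.total]
  calc 256 * (Hoch.a n + Hoch.b n + Hoch.c n + Hoch.d n)
      = 64 * (4 * Hoch.a n) + 16 * (16 * Hoch.b n) + 4 * (64 * Hoch.c n) +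
        256 * Hoch.d n := by ring
  _ = 64 * 4 ^ n + 16 * (4 ^ n * (3 * n + 1)) +
      4 * (4 ^ n * (3 * n ^ 2 + 7 * n + 6)) +
      4 ^ n * (n ^ 3 + 8 * n ^ 2 + 17 * n + 38) := by rw [ha, hb, hc, hd]
  _ = 4 ^ n * (n ^ 3 + 20 * n ^ 2 + 93 * n + 142) := by ring
end

section
/- For n ≥ 2, k ≥ 1 and 0 ≤ i ≤ k, let Z_i(n,k) be the set of k-chains u^{(1)} ≼ … ≼ u^{(k)} in the Hochschild lattice of size n in which exactly the last i triwords contain no letter 0. Then |Z_i(n,k)| = (k+1)·|Z_i(n−1,k)| + (i+1)·∑_{j=i+1}^{k} |Z_j(n−1,k)|. -/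
/-- `Z n k i`: the set of `k`-chains `u⁽¹⁾ ≼ … ≼ u⁽ᵏ⁾` in the Hochschild
lattice of size `n` in which exactly the last `i` triwords contain no letter
`0` (a triword of a chain, indexed from `0` to `k-1`, contains a `0` iff its
index is `< k - i`). -/
def Z (n k i : ℕ) : Type :=
  {c : Fin k → Triword n // Monotone c ∧
    ∀ r : Fin k, ((∃ idx, (c r).1 idx = 0) ↔ (r : ℕ) < k - i)}

/-! ### Auxiliary counting lemmas -/

/-- The number of elements of `Fin k` satisfying `P`. -/
noncomputable def zb {k : ℕ} (P : Fin k → Prop) : ℕ :=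
  @Finset.card _ (@Finset.filter _ P (Classical.decPred P) Finset.univ)

lemma zb_le {k : ℕ} (P : Fin k → Prop) : zb P ≤ k := by
  unfold zb
  letI := Classical.decPred P
  refine le_trans (Finset.card_filter_le _ _) ?_
  simp

/-- A downward closed property on `Fin k` holds exactly on an initial segment. -/
lemma lt_zb_iff {k : ℕ} {P : Fin k → Prop}
    (h : ∀ r r' : Fin k, r ≤ r' → P r' → P r) (r : Fin k) :
    P r ↔ (r : ℕ) < zb P := by
  unfold zb
  letI := Classical.decPred P
  constructor
  · intro hP
    have hsub : Finset.Iic r ⊆ @Finset.filter _ P (Classical.decPred P) Finset.univ := by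
      intro r' hr'
      exact Finset.mem_filter.2 ⟨Finset.mem_univ _, h r' r (Finset.mem_Iic.1 hr') hP⟩
    have := Finset.card_le_card hsub
    rw [Fin.card_Iic] at this
    omega
  · intro hlt
    by_contra hP
    have hsub : (@Finset.filter _ P (Classical.decPred P) Finset.univ) ⊆ Finset.Iio r := by
      intro r' hr'
      refine Finset.mem_Iio.2 (lt_of_not_ge fun hle => hP ?_)
      exact h r r' hle (Finset.mem_filter.1 hr').2
    have := Finset.card_le_card hsub
    rw [Fin.card_Iio] at this
    omega

lemma prefix_eq {k a b : ℕ} (ha : a ≤ k) (hb : b ≤ k)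
    (h : ∀ r : Fin k, (r : ℕ) < a ↔ (r : ℕ) < b) : a = b := by
  by_contra hne
  rcases Nat.lt_or_ge a b with hab | hab
  · have := (h ⟨a, lt_of_lt_of_le hab hb⟩).2 (by simpa)
    simp at this
  · have hba : b < a := by omega
    have := (h ⟨b, lt_of_lt_of_le hba ha⟩).1 (by simpa)
    simp at this

lemma nat_card_fiber_sum {α : Type*} [Finite α] (f : α → ℕ) (s : Finset ℕ)
    (hf : ∀ a, f a ∈ s) :
    Nat.card α = ∑ j ∈ s, Nat.card {a // f a = j} := by
  classical
  cases nonempty_fintype α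
  rw [Nat.card_eq_fintype_card, ← Finset.card_univ,
    Finset.card_eq_sum_card_fiberwise (fun a _ => hf a)]
  refine Finset.sum_congr rfl fun j _ => ?_
  rw [Nat.card_eq_fintype_card, Fintype.card_subtype]

lemma fin3_simp : ((2 : Fin 3) : ℕ) = 2 ∧ ((1 : Fin 3) : ℕ) = 1 ∧ ((0 : Fin 3) : ℕ) = 0 := by
  decide

lemma fin3_cases (x : Fin 3) :
    (x = 0 ↔ (x : ℕ) = 0) ∧ (x = 1 ↔ (x : ℕ) = 1) ∧ (x = 2 ↔ (x : ℕ) = 2) := by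
  refine ⟨?_, ?_, ?_⟩ <;> rw [Fin.ext_iff] <;> simp [fin3_simp.1, fin3_simp.2.1, fin3_simp.2.2]

/-! ### Possible last columns -/

/-- `T k i j` : the possible last columns of a chain in `Z (m+1) k i` whose
restriction to the first `m` letters lies in `Z m k j`. -/
def T (k i j : ℕ) : Type :=
  {t : Fin k → Fin 3 // Monotone t ∧ (∀ r : Fin k, (r : ℕ) < k - j → t r ≠ 1)
    ∧ (∀ r : Fin k, k - j ≤ (r : ℕ) → (r : ℕ) < k - i → t r = 0)
    ∧ ∀ r : Fin k, k - i ≤ (r : ℕ) → t r ≠ 0}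

instance {n k i : ℕ} : Finite (Z n k i) := by unfold Z; infer_instance
instance {k i j : ℕ} : Finite (T k i j) := by unfold T; infer_instance

/-- the parametrized triple-step word used to enumerate `T` -/
def tw (k a b : ℕ) : Fin k → Fin 3 :=
  fun r => if (r : ℕ) < a then 0 else if (r : ℕ) < b then 1 else 2

lemma tw_val (k a b : ℕ) (r : Fin k) :
    ((tw k a b r : Fin 3) : ℕ) = if (r : ℕ) < a then 0 else if (r : ℕ) < b then 1 else 2 := by
  unfold tw
  rw [apply_ite Fin.val, apply_ite Fin.val]
  simp [fin3_simp.1, fin3_simp.2.1, fin3_simp.2.2]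

lemma tw_mono {k a b : ℕ} (hab : a ≤ b) : Monotone (tw k a b) := by
  intro r r' hle
  have hv : (r : ℕ) ≤ (r' : ℕ) := hle
  rw [Fin.le_def, tw_val, tw_val]
  split_ifs <;> omega

lemma card_T_self {k i : ℕ} (hi : i ≤ k) : Nat.card (T k i i) = k + 1 := by
  have hmem : ∀ b : Fin (k+1), Monotone (tw k (min (b : ℕ) (k-i)) (b : ℕ)) ∧
      (∀ r : Fin k, (r : ℕ) < k - i → tw k (min (b : ℕ) (k-i)) (b : ℕ) r ≠ 1)
      ∧ (∀ r : Fin k, k - i ≤ (r : ℕ) → (r : ℕ) < k - i → tw k (min (b : ℕ) (k-i)) (b : ℕ) r = 0)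
      ∧ ∀ r : Fin k, k - i ≤ (r : ℕ) → tw k (min (b : ℕ) (k-i)) (b : ℕ) r ≠ 0 := by
    intro b
    refine ⟨tw_mono (min_le_left _ _), ?_, fun r hr hr' => by omega, ?_⟩
    · intro r hr hne
      have := (fin3_cases _).2.1.1 hne
      rw [tw_val] at this
      have hmin := min_le_right (b : ℕ) (k - i)
      have hmin' := min_le_left (b : ℕ) (k - i)
      split_ifs at this <;> omega
    · intro r hr hne
      have := (fin3_cases _).1.1 hne
      rw [tw_val] at this
      have hmin := min_le_right (b : ℕ) (k - i)
      split_ifs at this <;> omega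
  have hbij : Function.Bijective
      (fun b : Fin (k+1) => (⟨tw k (min (b : ℕ) (k-i)) (b : ℕ), hmem b⟩ : T k i i)) := by
    constructor
    · intro b b' heq
      have h1 : tw k (min (b : ℕ) (k-i)) (b : ℕ) = tw k (min (b' : ℕ) (k-i)) (b' : ℕ) :=
        congrArg Subtype.val heq
      by_contra hne
      have hvne : (b : ℕ) ≠ (b' : ℕ) := fun h => hne (Fin.ext h)
      have key : ∀ c c' : Fin (k+1), (c : ℕ) < (c' : ℕ) →
          tw k (min (c : ℕ) (k-i)) (c : ℕ) ≠ tw k (min (c' : ℕ) (k-i)) (c' : ℕ) := by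
        intro c c' hlt hfeq
        have hck : (c : ℕ) < k := lt_of_lt_of_le hlt (Nat.lt_succ_iff.1 c'.isLt)
        have := congrArg Fin.val (congrFun hfeq ⟨(c : ℕ), hck⟩)
        rw [tw_val, tw_val] at this
        simp only [Fin.val_mk] at this
        have hm1 := min_le_left (c : ℕ) (k - i)
        have hm2 := min_le_right (c' : ℕ) (k - i)
        have hm3 := min_le_left (c' : ℕ) (k - i)
        have hm4 : (c : ℕ) ≤ (c' : ℕ) → min (c : ℕ) (k-i) ≤ min (c' : ℕ) (k-i) :=
          fun h => min_le_min h le_rfl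
        split_ifs at this <;> omega
      rcases Nat.lt_or_ge (b : ℕ) (b' : ℕ) with h | h
      · exact key b b' h h1
      · exact key b' b (by omega) h1.symm
    · rintro ⟨t, hmono, h1, _, h3⟩
      have hdb : ∀ r r' : Fin k, r ≤ r' → t r' ≤ 1 → t r ≤ 1 := fun r r' hle h =>
        le_trans (hmono hle) h
      have hda : ∀ r r' : Fin k, r ≤ r' → t r' = 0 → t r = 0 := by
        intro r r' hle h
        have h2 := Fin.le_def.1 (hmono hle)
        rw [h] at h2
        rw [(fin3_cases _).1]
        rw [fin3_simp.2.2] at h2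
        omega
      have hb := fun r => lt_zb_iff hdb r
      have ha := fun r => lt_zb_iff hda r
      set b := zb (fun r => t r ≤ 1) with hbdef
      set a := zb (fun r => t r = 0) with hadef
      have hbk : b ≤ k := zb_le _
      have hak : a ≤ k := zb_le _
      have haki : a ≤ k - i := by
        by_contra hc
        push_neg at hc
        have hik : k - i < k := by omega
        have h0 : t ⟨k - i, hik⟩ = 0 := by
          rw [ha ⟨k - i, hik⟩]; simp only [Fin.val_mk]; omega
        exact h3 ⟨k - i, hik⟩ (by simp) h0
      have hab : a ≤ b := by
        by_contra hc
        push_neg at hc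
        have hbk' : b < k := by omega
        have h0 : t ⟨b, hbk'⟩ = 0 := by
          rw [ha ⟨b, hbk'⟩]; simp only [Fin.val_mk]; omega
        have hle1 : t ⟨b, hbk'⟩ ≤ 1 := by rw [h0]; decide
        have := (hb ⟨b, hbk'⟩).1 hle1
        simp only [Fin.val_mk] at this
        omega
      have hC : a = b ∨ a = k - i := by
        by_contra hc
        push_neg at hc
        have h1a : a < b := lt_of_le_of_ne hab hc.1
        have h2a : a < k - i := lt_of_le_of_ne haki hc.2
        have hak' : a < k := by omega
        have hne0 : t ⟨a, hak'⟩ ≠ 0 := fun h => by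
          have := (ha ⟨a, hak'⟩).1 h
          simp only [Fin.val_mk] at this
          omega
        have hle1 : t ⟨a, hak'⟩ ≤ 1 := by
          rw [hb ⟨a, hak'⟩]; simp only [Fin.val_mk]; omega
        have ht1 : t ⟨a, hak'⟩ = 1 := by
          have hv0 : ((t ⟨a, hak'⟩ : Fin 3) : ℕ) ≠ 0 := fun h => hne0 ((fin3_cases _).1.2 h)
          have hv1 : ((t ⟨a, hak'⟩ : Fin 3) : ℕ) ≤ 1 := by
            rw [Fin.le_def, fin3_simp.2.1] at hle1; exact hle1
          rw [(fin3_cases _).2.1]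
          omega
        exact h1 ⟨a, hak'⟩ (by simp only [Fin.val_mk]; omega) ht1
      refine ⟨⟨b, by omega⟩, ?_⟩
      refine Subtype.ext (funext fun r => ?_)
      have h0 := ha r
      have h1' := hb r
      have hlt3 := (t r).isLt
      rw [(fin3_cases _).1] at h0
      rw [Fin.le_def, fin3_simp.2.1] at h1'
      rw [Fin.ext_iff, tw_val]
      simp only [Fin.val_mk]
      have hC' := hC
      split_ifs with hc1 hc2 <;> omega
  have h : Nat.card (T k i i) = Nat.card (Fin (k+1)) := (Nat.card_eq_of_bijective _ hbij).symm
  rw [h]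
  simp

lemma card_T_lt {k i j : ℕ} (hij : i < j) (hj : j ≤ k) : Nat.card (T k i j) = i + 1 := by
  have hik : i < k := lt_of_lt_of_le hij hj
  have hkj : k - j < k - i := by omega
  have hmem : ∀ s : Fin (i+1), Monotone (tw k (k-i) (k-i+(s:ℕ))) ∧
      (∀ r : Fin k, (r : ℕ) < k - j → tw k (k-i) (k-i+(s:ℕ)) r ≠ 1)
      ∧ (∀ r : Fin k, k - j ≤ (r : ℕ) → (r : ℕ) < k - i → tw k (k-i) (k-i+(s:ℕ)) r = 0)
      ∧ ∀ r : Fin k, k - i ≤ (r : ℕ) → tw k (k-i) (k-i+(s:ℕ)) r ≠ 0 := by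
    intro s
    refine ⟨tw_mono (by omega), ?_, ?_, ?_⟩
    · intro r hr hne
      have := (fin3_cases _).2.1.1 hne
      rw [tw_val] at this
      split_ifs at this <;> omega
    · intro r hr hr'
      rw [(fin3_cases _).1, tw_val]
      split_ifs <;> omega
    · intro r hr hne
      have := (fin3_cases _).1.1 hne
      rw [tw_val] at this
      split_ifs at this <;> omega
  have hbij : Function.Bijective
      (fun s : Fin (i+1) => (⟨tw k (k-i) (k-i+(s:ℕ)), hmem s⟩ : T k i j)) := by
    constructor
    · intro s s' heq
      have h1 : tw k (k-i) (k-i+(s:ℕ)) = tw k (k-i) (k-i+(s':ℕ)) :=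
        congrArg Subtype.val heq
      by_contra hne
      have hvne : (s : ℕ) ≠ (s' : ℕ) := fun h => hne (Fin.ext h)
      have key : ∀ c c' : Fin (i+1), (c : ℕ) < (c' : ℕ) →
          tw k (k-i) (k-i+(c:ℕ)) ≠ tw k (k-i) (k-i+(c':ℕ)) := by
        intro c c' hlt hfeq
        have hck : k - i + (c : ℕ) < k := by
          have := Nat.lt_succ_iff.1 c'.isLt
          omega
        have := congrArg Fin.val (congrFun hfeq ⟨k - i + (c : ℕ), hck⟩)
        rw [tw_val, tw_val] at this
        simp only [Fin.val_mk] at this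
        split_ifs at this <;> omega
      rcases Nat.lt_or_ge (s : ℕ) (s' : ℕ) with h | h
      · exact key s s' h h1
      · exact key s' s (by omega) h1.symm
    · rintro ⟨t, hmono, h1, h2, h3⟩
      have hdb : ∀ r r' : Fin k, r ≤ r' → t r' ≤ 1 → t r ≤ 1 := fun r r' hle h =>
        le_trans (hmono hle) h
      have hb := fun r => lt_zb_iff hdb r
      set b := zb (fun r => t r ≤ 1) with hbdef
      have hbk : b ≤ k := zb_le _
      have hzero : ∀ r : Fin k, t r = 0 ↔ (r : ℕ) < k - i := by
        intro r
        constructor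
        · intro h0
          by_contra hc
          exact h3 r (by omega) h0
        · intro hr
          rcases Nat.lt_or_ge (r : ℕ) (k - j) with hcase | hcase
          · have hkjk : k - j < k := by omega
            have h0 : t ⟨k - j, hkjk⟩ = 0 :=
              h2 ⟨k - j, hkjk⟩ (by simp) (by simp only [Fin.val_mk]; omega)
            have hle : t r ≤ t ⟨k - j, hkjk⟩ :=
              hmono (by rw [Fin.le_def]; simp only [Fin.val_mk]; omega)
            rw [h0] at hle
            have := Fin.le_def.1 hle
            rw [fin3_simp.2.2] at this
            rw [(fin3_cases _).1]
            omega
          · exact h2 r hcase hr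
      have hbki : k - i ≤ b := by
        by_contra hc
        push_neg at hc
        have hbk' : b < k := by omega
        have h0 : t ⟨b, hbk'⟩ = 0 := (hzero ⟨b, hbk'⟩).2 (by simp only [Fin.val_mk]; omega)
        have hle1 : t ⟨b, hbk'⟩ ≤ 1 := by rw [h0]; decide
        have := (hb ⟨b, hbk'⟩).1 hle1
        simp only [Fin.val_mk] at this
        omega
      refine ⟨⟨b - (k - i), by omega⟩, ?_⟩
      refine Subtype.ext (funext fun r => ?_)
      have h0 := hzero r
      have h1' := hb r
      have hlt3 := (t r).isLt
      rw [(fin3_cases _).1] at h0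
      rw [Fin.le_def, fin3_simp.2.1] at h1'
      rw [Fin.ext_iff, tw_val]
      simp only [Fin.val_mk]
      split_ifs with hc1 hc2 <;> omega
  have h : Nat.card (T k i j) = Nat.card (Fin (i+1)) := (Nat.card_eq_of_bijective _ hbij).symm
  rw [h]
  simp

/-! ### The decomposition of a chain into its restriction and its last column -/

lemma triword_le_iff {n : ℕ} (u v : Triword n) : u ≤ v ↔ ∀ p, u.1 p ≤ v.1 p := by
  rw [← Subtype.coe_le_coe]
  exact Pi.le_def

def snocW {m : ℕ} (u : Fin m → Fin 3) (x : Fin 3) : Fin (m+1) → Fin 3 :=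
  fun p => if h : (p : ℕ) < m then u ⟨p, h⟩ else x

lemma snocW_castSucc {m : ℕ} (u : Fin m → Fin 3) (x : Fin 3) (p : Fin m) :
    snocW u x p.castSucc = u p := by
  simp only [snocW, Fin.coe_castSucc, p.isLt, dif_pos, Fin.eta]

lemma snocW_last {m : ℕ} (u : Fin m → Fin 3) (x : Fin 3) :
    snocW u x (Fin.last m) = x := by
  simp [snocW]

/-- `k` minus the number of rows of the restriction to the first `m` letters
containing a zero. -/
noncomputable def Fz {m k i : ℕ} (c : Z (m+1) k i) : ℕ :=
  k - zb (fun r => ∃ p : Fin m, (c.1 r).1 p.castSucc = 0)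

lemma S_dc {m k i : ℕ} (c : Z (m+1) k i) :
    ∀ r r' : Fin k, r ≤ r' → (∃ p : Fin m, (c.1 r').1 p.castSucc = 0) →
      (∃ p : Fin m, (c.1 r).1 p.castSucc = 0) := by
  rintro r r' hle ⟨p, hp⟩
  refine ⟨p, ?_⟩
  have hle2 := (triword_le_iff _ _).1 (c.2.1 hle) p.castSucc
  rw [hp] at hle2
  have := Fin.le_def.1 hle2
  rw [fin3_simp.2.2] at this
  rw [(fin3_cases _).1]
  omega

lemma Fz_mem {m k i : ℕ} (hi : i ≤ k) (c : Z (m+1) k i) : Fz c ∈ Finset.Icc i k := by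
  have hS := fun r => lt_zb_iff (S_dc c) r
  set d := zb (fun r => ∃ p : Fin m, (c.1 r).1 p.castSucc = 0) with hd
  have hdk : d ≤ k := zb_le _
  have hdki : d ≤ k - i := by
    by_contra hc
    push_neg at hc
    have hik : k - i < k := by omega
    have hmem := (hS ⟨k - i, hik⟩).2 (by simp only [Fin.val_mk]; omega)
    obtain ⟨p, hp⟩ := hmem
    have := (c.2.2 ⟨k - i, hik⟩).1 ⟨p.castSucc, hp⟩
    simp only [Fin.val_mk] at this
    omega
  rw [Finset.mem_Icc]
  unfold Fz
  rw [← hd]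
  omega

lemma fiber_card {m k i j : ℕ} (hm : 1 ≤ m) (hi : i ≤ j) (hj : j ≤ k) :
    Nat.card {c : Z (m+1) k i // Fz c = j} = Nat.card (Z m k j) * Nat.card (T k i j) := by
  have htrw : ∀ (u : Z m k j) (t : T k i j) (r : Fin k),
      IsTriword (snocW (u.1 r).1 (t.1 r)) := by
    intro u t r
    constructor
    · intro p hp0
      unfold snocW
      rw [dif_pos (show (p : ℕ) < m by omega)]
      exact (u.1 r).2.1 _ (by simp only [Fin.val_mk]; exact hp0)
    · intro p q hpq hp0 hq1
      have hpq' : (p : ℕ) < (q : ℕ) := hpq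
      by_cases hqm : (q : ℕ) < m
      · have hpm : (p : ℕ) < m := by omega
        unfold snocW at hp0 hq1
        rw [dif_pos hpm] at hp0
        rw [dif_pos hqm] at hq1
        exact (u.1 r).2.2 ⟨p, hpm⟩ ⟨q, hqm⟩ (by simp only [Fin.lt_def, Fin.val_mk]; omega) hp0 hq1
      · have hpm : (p : ℕ) < m := by have := q.isLt; omega
        unfold snocW at hp0 hq1
        rw [dif_pos hpm] at hp0
        rw [dif_neg hqm] at hq1
        have hrj := (u.2.2 r).1 ⟨⟨p, hpm⟩, hp0⟩
        exact t.2.2.1 r hrj hq1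
  have hGmem : ∀ (u : Z m k j) (t : T k i j),
      (Monotone (fun r : Fin k => (⟨snocW (u.1 r).1 (t.1 r), htrw u t r⟩ : Triword (m+1)))) ∧
      ∀ r : Fin k, ((∃ idx, snocW (u.1 r).1 (t.1 r) idx = 0) ↔ (r : ℕ) < k - i) := by
    intro u t
    constructor
    · intro r r' hle
      rw [triword_le_iff]
      intro p
      dsimp only
      unfold snocW
      by_cases h : (p : ℕ) < m
      · rw [dif_pos h, dif_pos h]
        exact (triword_le_iff _ _).1 (u.2.1 hle) ⟨p, h⟩
      · rw [dif_neg h, dif_neg h]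
        exact t.2.1 hle
    · intro r
      constructor
      · rintro ⟨idx, hidx⟩
        by_cases h : (idx : ℕ) < m
        · unfold snocW at hidx
          rw [dif_pos h] at hidx
          have := (u.2.2 r).1 ⟨⟨idx, h⟩, hidx⟩
          omega
        · unfold snocW at hidx
          rw [dif_neg h] at hidx
          by_contra hc
          exact t.2.2.2.2 r (by omega) hidx
      · intro hr
        rcases Nat.lt_or_ge (r : ℕ) (k - j) with hcase | hcase
        · obtain ⟨idx, hidx⟩ := (u.2.2 r).2 hcase
          exact ⟨idx.castSucc, by rw [snocW_castSucc]; exact hidx⟩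
        · exact ⟨Fin.last m, by rw [snocW_last]; exact t.2.2.2.1 r hcase hr⟩
  have hGfib : ∀ (u : Z m k j) (t : T k i j),
      Fz (⟨fun r => ⟨snocW (u.1 r).1 (t.1 r), htrw u t r⟩, hGmem u t⟩ : Z (m+1) k i) = j := by
    intro u t
    show k - zb (fun r => ∃ p : Fin m, snocW (u.1 r).1 (t.1 r) p.castSucc = 0) = j
    have hdc : ∀ r r' : Fin k, r ≤ r' →
        (∃ p : Fin m, snocW (u.1 r').1 (t.1 r') p.castSucc = 0) →
        (∃ p : Fin m, snocW (u.1 r).1 (t.1 r) p.castSucc = 0) :=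
      S_dc (⟨fun r => ⟨snocW (u.1 r).1 (t.1 r), htrw u t r⟩, hGmem u t⟩ : Z (m+1) k i)
    have heq : zb (fun r => ∃ p : Fin m, snocW (u.1 r).1 (t.1 r) p.castSucc = 0) = k - j := by
      refine prefix_eq (zb_le _) (by omega) fun r => ?_
      rw [← lt_zb_iff hdc r]
      constructor
      · rintro ⟨p, hp⟩
        rw [snocW_castSucc] at hp
        exact (u.2.2 r).1 ⟨p, hp⟩
      · intro hr
        obtain ⟨p, hp⟩ := (u.2.2 r).2 hr
        exact ⟨p, by rw [snocW_castSucc]; exact hp⟩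
    rw [heq]
    omega
  have hbij : Function.Bijective (fun x : Z m k j × T k i j =>
      (⟨⟨fun r => ⟨snocW (x.1.1 r).1 (x.2.1 r), htrw x.1 x.2 r⟩, hGmem x.1 x.2⟩,
        hGfib x.1 x.2⟩ : {c : Z (m+1) k i // Fz c = j})) := by
    constructor
    · rintro ⟨u, t⟩ ⟨u', t'⟩ heq
      have hw : ∀ r : Fin k, snocW (u.1 r).1 (t.1 r) = snocW (u'.1 r).1 (t'.1 r) := by
        intro r
        have := congrArg (fun x => (x.1.1 r).1) heq
        exact this
      have hu : u = u' := by
        refine Subtype.ext (funext fun r => Subtype.ext (funext fun p => ?_))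
        have := congrFun (hw r) p.castSucc
        rwa [snocW_castSucc, snocW_castSucc] at this
      have ht : t = t' := by
        refine Subtype.ext (funext fun r => ?_)
        have := congrFun (hw r) (Fin.last m)
        rwa [snocW_last, snocW_last] at this
      rw [Prod.ext_iff]
      exact ⟨hu, ht⟩
    · rintro ⟨c, hF⟩
      have hS := fun r => lt_zb_iff (S_dc c) r
      set d := zb (fun r => ∃ p : Fin m, (c.1 r).1 p.castSucc = 0) with hd
      have hdk : d ≤ k := zb_le _
      have hdkj : d = k - j := by
        unfold Fz at hF
        rw [← hd] at hF
        have hdki : d ≤ k - i := by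
          by_contra hc
          push_neg at hc
          have hik : k - i < k := by omega
          obtain ⟨p, hp⟩ := (hS ⟨k - i, hik⟩).2 (by simp only [Fin.val_mk]; omega)
          have := (c.2.2 ⟨k - i, hik⟩).1 ⟨p.castSucc, hp⟩
          simp only [Fin.val_mk] at this
          omega
        omega
      have hutrw : ∀ r : Fin k, IsTriword (fun p : Fin m => (c.1 r).1 p.castSucc) := by
        intro r
        constructor
        · intro p hp0
          exact (c.1 r).2.1 p.castSucc (by simpa using hp0)
        · intro p q hpq hp0 hq1
          exact (c.1 r).2.2 p.castSucc q.castSucc (by simpa using hpq) hp0 hq1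
      have humem : Monotone
            (fun r : Fin k => (⟨fun p : Fin m => (c.1 r).1 p.castSucc, hutrw r⟩ : Triword m)) ∧
          ∀ r : Fin k, ((∃ idx : Fin m, (c.1 r).1 idx.castSucc = 0) ↔ (r : ℕ) < k - j) := by
        constructor
        · intro r r' hle
          rw [triword_le_iff]
          intro p
          exact (triword_le_iff _ _).1 (c.2.1 hle) p.castSucc
        · intro r
          rw [← hdkj, ← hS r]
      set u : Z m k j := ⟨fun r => ⟨fun p : Fin m => (c.1 r).1 p.castSucc, hutrw r⟩, humem⟩
        with hu
      have htmem : Monotone (fun r : Fin k => (c.1 r).1 (Fin.last m)) ∧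
          (∀ r : Fin k, (r : ℕ) < k - j → (c.1 r).1 (Fin.last m) ≠ 1)
          ∧ (∀ r : Fin k, k - j ≤ (r : ℕ) → (r : ℕ) < k - i → (c.1 r).1 (Fin.last m) = 0)
          ∧ ∀ r : Fin k, k - i ≤ (r : ℕ) → (c.1 r).1 (Fin.last m) ≠ 0 := by
        refine ⟨?_, ?_, ?_, ?_⟩
        · intro r r' hle
          exact (triword_le_iff _ _).1 (c.2.1 hle) (Fin.last m)
        · intro r hr
          obtain ⟨p, hp⟩ := (hS r).2 (by omega)
          exact (c.1 r).2.2 p.castSucc (Fin.last m) (Fin.castSucc_lt_last p) hp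
        · intro r hr hr'
          obtain ⟨idx, hidx⟩ := (c.2.2 r).2 hr'
          by_cases h : (idx : ℕ) < m
          · exfalso
            have hmem : ∃ p : Fin m, (c.1 r).1 p.castSucc = 0 := by
              refine ⟨⟨idx, h⟩, ?_⟩
              have hcast : (⟨(idx : ℕ), h⟩ : Fin m).castSucc = idx := by
                apply Fin.ext
                simp
              rw [hcast]
              exact hidx
            have := (hS r).1 hmem
            omega
          · have hidxl : idx = Fin.last m := by
              apply Fin.ext
              have := idx.isLt
              simp only [Fin.val_last]
              omega
            rw [← hidxl]
            exact hidx
        · intro r hr h0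
          have := (c.2.2 r).1 ⟨Fin.last m, h0⟩
          omega
      set t : T k i j := ⟨fun r => (c.1 r).1 (Fin.last m), htmem⟩ with ht
      refine ⟨⟨u, t⟩, ?_⟩
      refine Subtype.ext (Subtype.ext (funext fun r => Subtype.ext (funext fun p => ?_)))
      show snocW (u.1 r).1 (t.1 r) p = (c.1 r).1 p
      unfold snocW
      by_cases h : (p : ℕ) < m
      · rw [dif_pos h]
        show (c.1 r).1 (⟨(p : ℕ), h⟩ : Fin m).castSucc = (c.1 r).1 p
        congr 1
      · rw [dif_neg h]
        show (c.1 r).1 (Fin.last m) = (c.1 r).1 p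
        have hp : p = Fin.last m := by
          apply Fin.ext
          have := p.isLt
          rw [Fin.val_last]
          omega
        rw [hp]
  rw [← Nat.card_eq_of_bijective _ hbij, Nat.card_prod]

lemma card_Z_split {m k i : ℕ} (hm : 1 ≤ m) (hi : i ≤ k) :
    Nat.card (Z (m+1) k i) = ∑ j ∈ Finset.Icc i k, Nat.card (Z m k j) * Nat.card (T k i j) := by
  rw [nat_card_fiber_sum Fz (Finset.Icc i k) (Fz_mem hi)]
  refine Finset.sum_congr rfl fun j hj => ?_
  rw [Finset.mem_Icc] at hj
  exact fiber_card hm hj.1 hj.2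

/-- The recurrence `|Z_i(n,k)| = (k+1)|Z_i(n-1,k)| + (i+1) ∑_{j=i+1}^k |Z_j(n-1,k)|`. -/
theorem z_recurrence (n k i : ℕ) (hn : 2 ≤ n) (hk : 1 ≤ k) (hi : i ≤ k) :
    Nat.card (Z n k i) =
      (k + 1) * Nat.card (Z (n - 1) k i) +
      (i + 1) * ∑ j ∈ Finset.Icc (i + 1) k, Nat.card (Z (n - 1) k j) := by
  obtain ⟨m, rfl⟩ : ∃ m, n = m + 1 := ⟨n - 1, by omega⟩
  have hm : 1 ≤ m := by omega
  simp only [Nat.add_sub_cancel]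
  rw [card_Z_split hm hi, Finset.Icc_eq_cons_Ioc hi, Finset.sum_cons, card_T_self hi,
    Finset.Icc_add_one_left_eq_Ioc, Nat.mul_comm (Nat.card (Z m k i)) (k+1), Finset.mul_sum]
  congr 1
  refine Finset.sum_congr rfl fun j hj => ?_
  rw [Finset.mem_Ioc] at hj
  rw [card_T_lt hj.1 hj.2, Nat.mul_comm]
end

section
/- The number of triwords of size n ≥ 1 whose first letter is 1 (μ-triwords) is 2^{n−2} · (n+1). -/
def NoZeroOne {m : ℕ} (v : Fin m → Fin 3) : Prop :=
  ∀ i j : Fin m, i < j → v i = 0 → v j ≠ 1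

instance {m : ℕ} : DecidablePred (@NoZeroOne m) := fun v =>
  inferInstanceAs (Decidable (∀ i j : Fin m, i < j → v i = 0 → v j ≠ 1))

instance {n : ℕ} : DecidablePred (@IsTriword n) := fun u =>
  inferInstanceAs (Decidable (_ ∧ _))

lemma cons_noZeroOne {m : ℕ} (a : Fin 3) (v : Fin m → Fin 3) :
    NoZeroOne (Fin.cons a v) ↔ NoZeroOne v ∧ (a = 0 → ∀ j, v j ≠ 1) := by
  constructor
  · intro h
    refine ⟨fun i j hij h0 => ?_, fun ha j => ?_⟩
    · have := h i.succ j.succ (by simpa using hij) (by simpa using h0)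
      simpa using this
    · have := h 0 j.succ (Fin.succ_pos j) (by simpa using ha)
      simpa using this
  · rintro ⟨h1, h2⟩ i j hij h0
    induction i using Fin.cases with
    | zero =>
      induction j using Fin.cases with
      | zero => exact absurd hij (lt_irrefl _)
      | succ j =>
        simp only [Fin.cons_zero] at h0
        simpa using h2 h0 j
    | succ i =>
      induction j using Fin.cases with
      | zero => exact absurd hij (by simp [Fin.lt_def])
      | succ j =>
        have hij' : i < j := by simpa using hij
        simpa using h1 i j hij' (by simpa using h0)

lemma card_no_one (m : ℕ) :
    Fintype.card {v : Fin m → Fin 3 // ∀ j, v j ≠ 1} = 2 ^ m := by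
  have e : {v : Fin m → Fin 3 // ∀ j, v j ≠ 1} ≃ (Fin m → {x : Fin 3 // x ≠ 1}) :=
    Equiv.subtypePiEquivPi (p := fun _ b => b ≠ 1)
  rw [Fintype.card_congr e, Fintype.card_fun, Fintype.card_fin,
    show Fintype.card {x : Fin 3 // x ≠ 1} = 2 by rfl]

lemma card_succ (m : ℕ) :
    Fintype.card {u : Fin (m + 1) → Fin 3 // NoZeroOne u}
      = 2 * Fintype.card {v : Fin m → Fin 3 // NoZeroOne v} + 2 ^ m := by
  have e1 : {u : Fin (m + 1) → Fin 3 // NoZeroOne u}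
      ≃ {p : Fin 3 × (Fin m → Fin 3) // NoZeroOne p.2 ∧ (p.1 = 0 → ∀ j, p.2 j ≠ 1)} := by
    refine Equiv.subtypeEquiv ((Fin.consEquiv (fun _ => Fin 3)).symm) (fun u => ?_)
    conv_lhs => rw [← Fin.cons_self_tail u]
    rw [cons_noZeroOne]
    rfl
  have e2 : {p : Fin 3 × (Fin m → Fin 3) // NoZeroOne p.2 ∧ (p.1 = 0 → ∀ j, p.2 j ≠ 1)}
      ≃ Σ a : Fin 3, {v : Fin m → Fin 3 // NoZeroOne v ∧ (a = 0 → ∀ j, v j ≠ 1)} :=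
    Equiv.subtypeProdEquivSigmaSubtype
      (fun (a : Fin 3) (v : Fin m → Fin 3) => NoZeroOne v ∧ (a = 0 → ∀ j, v j ≠ 1))
  rw [Fintype.card_congr (e1.trans e2), Fintype.card_sigma, Fin.sum_univ_three]
  have h0 : Fintype.card {v : Fin m → Fin 3 // NoZeroOne v ∧ ((0 : Fin 3) = 0 → ∀ j, v j ≠ 1)}
      = 2 ^ m := by
    rw [← card_no_one m]
    refine Fintype.card_congr (Equiv.subtypeEquivRight (fun v => ?_))
    constructor
    · rintro ⟨_, h⟩; exact h rfl
    · intro h; exact ⟨fun i j _ _ hj => h j hj, fun _ => h⟩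
  have h1 : ∀ a : Fin 3, a ≠ 0 →
      Fintype.card {v : Fin m → Fin 3 // NoZeroOne v ∧ (a = 0 → ∀ j, v j ≠ 1)}
        = Fintype.card {v : Fin m → Fin 3 // NoZeroOne v} := by
    intro a ha
    refine Fintype.card_congr (Equiv.subtypeEquivRight (fun v => ?_))
    simp [ha]
  rw [h0, h1 1 (by decide), h1 2 (by decide)]
  ring

lemma two_mul_card (m : ℕ) :
    2 * Fintype.card {v : Fin m → Fin 3 // NoZeroOne v} = 2 ^ m * (m + 2) := by
  induction m with
  | zero => decide
  | succ m ih =>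
    rw [card_succ m]
    ring_nf
    ring_nf at ih
    rw [mul_comm] at ih ⊢
    nlinarith [ih, pow_pos (by norm_num : 0 < 2) m]

/-- The number of μ-triwords of size `n ≥ 1` (triwords whose first letter is
`1`) is `2^(n-2) (n+1)` (stated multiplied by `4` to avoid natural subtraction
in the exponent). -/
theorem card_mu_triwords (n : ℕ) (hn : 1 ≤ n) :
    4 * Nat.card {u : Fin n → Fin 3 //
        IsTriword u ∧ ∀ i : Fin n, (i : ℕ) = 0 → u i = 1} =
      2 ^ n * (n + 1) := by
  obtain ⟨m, rfl⟩ : ∃ m, n = m + 1 := ⟨n - 1, (Nat.succ_pred_eq_of_pos hn).symm⟩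
  have e : {u : Fin (m + 1) → Fin 3 //
      IsTriword u ∧ ∀ i : Fin (m + 1), (i : ℕ) = 0 → u i = 1}
      ≃ {v : Fin m → Fin 3 // NoZeroOne v} := by
    refine ⟨fun u => ⟨Fin.tail u.1, fun i j hij h0 => ?_⟩,
      fun v => ⟨Fin.cons 1 v.1, ⟨⟨fun i hi => ?_, ?_⟩, fun i hi => ?_⟩⟩, ?_, ?_⟩
    · exact u.2.1.2 i.succ j.succ (by simpa using hij) h0
    · have : i = 0 := Fin.ext hi
      subst this
      simp
    · exact (cons_noZeroOne 1 v.1).mpr ⟨v.2, fun h => absurd h (by decide)⟩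
    · have : i = 0 := Fin.ext hi
      subst this
      simp
    · rintro ⟨u, hu⟩
      have h0 : u 0 = 1 := hu.2 0 rfl
      apply Subtype.ext
      simp only
      rw [← h0, Fin.cons_self_tail]
    · rintro ⟨v, hv⟩
      apply Subtype.ext
      simp [Fin.tail_cons]
  rw [Nat.card_eq_fintype_card, Fintype.card_congr e]
  have := two_mul_card m
  calc 4 * Fintype.card {v : Fin m → Fin 3 // NoZeroOne v}
      = 2 * (2 * Fintype.card {v : Fin m → Fin 3 // NoZeroOne v}) := by ring
    _ = 2 * (2 ^ m * (m + 2)) := by rw [this]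
    _ = 2 ^ (m + 1) * (m + 1 + 1) := by ring
end

section
/- The generating function of triwords (by size) is (1−z)²/(1−2z)², i.e., ∑_{n≥0} |Tr(n)| z^n = (1−z)²/(1−2z)² where |Tr(0)| = 1. -/
def Avoid' {n : ℕ} (u : Fin n → Fin 3) : Prop :=
  ∀ i j : Fin n, i < j → u i = 0 → u j ≠ 1

instance {n : ℕ} : DecidablePred (@Avoid' n) := fun u => by
  unfold Avoid'; infer_instance

instance inst_s18 {n : ℕ} : DecidablePred (@IsTriword n) := fun u => by
  unfold IsTriword; infer_instance

lemma avoid_cons {n : ℕ} (a : Fin 3) (v : Fin n → Fin 3) :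
    Avoid' (Fin.cons a v) ↔ (a = 0 → ∀ k, v k ≠ 1) ∧ Avoid' v := by
  constructor
  · intro h
    refine ⟨fun ha k => ?_, fun i j hij hi => ?_⟩
    · have := h 0 k.succ (Fin.succ_pos k) (by rw [Fin.cons_zero, ha])
      simpa using this
    · have := h i.succ j.succ (by simpa using hij) (by simpa using hi)
      simpa using this
  · rintro ⟨h1, h2⟩ i j
    revert i
    refine Fin.cases ?_ ?_ j
    · intro i h; exact absurd h (Fin.not_lt_zero i)
    · intro j' i
      refine Fin.cases ?_ ?_ i
      · intro _ ha
        simp only [Fin.cons_zero] at ha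
        simp only [Fin.cons_succ]
        exact h1 ha j'
      · intro i' hlt hi'
        simp only [Fin.cons_succ] at hi' ⊢
        exact h2 i' j' (by simpa using hlt) hi'

lemma triword_cons {n : ℕ} (a : Fin 3) (v : Fin n → Fin 3) :
    IsTriword (Fin.cons a v) ↔ a ≠ 2 ∧ ((a = 0 → ∀ k, v k ≠ 1) ∧ Avoid' v) := by
  rw [show ((a = 0 → ∀ k, v k ≠ 1) ∧ Avoid' v) ↔ Avoid' (Fin.cons a v) from (avoid_cons a v).symm]
  unfold IsTriword Avoid'
  constructor
  · rintro ⟨h1, h2⟩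
    exact ⟨by simpa using h1 0 rfl, h2⟩
  · rintro ⟨h1, h2⟩
    refine ⟨fun i hi => ?_, h2⟩
    have : i = 0 := by
      ext; simpa using hi
    rw [this, Fin.cons_zero]; exact h1

def consSigmaEquiv {n : ℕ} (Q : (Fin (n+1) → Fin 3) → Prop) :
    {u : Fin (n+1) → Fin 3 // Q u} ≃ Σ a : Fin 3, {v : Fin n → Fin 3 // Q (Fin.cons a v)} where
  toFun u := ⟨u.1 0, Fin.tail u.1, by rw [Fin.cons_self_tail]; exact u.2⟩
  invFun s := ⟨Fin.cons s.1 s.2.1, s.2.2⟩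
  left_inv u := by ext : 1; exact Fin.cons_self_tail u.1
  right_inv _ := rfl

lemma card_succ_s18 {n : ℕ} (Q : (Fin (n+1) → Fin 3) → Prop) [DecidablePred Q] :
    Nat.card {u : Fin (n+1) → Fin 3 // Q u}
      = ∑ a : Fin 3, Nat.card {v : Fin n → Fin 3 // Q (Fin.cons a v)} := by
  simp only [Nat.card_eq_fintype_card]
  rw [Fintype.card_congr (consSigmaEquiv Q), Fintype.card_sigma]

lemma card_noone {n : ℕ} :
    Nat.card {v : Fin n → Fin 3 // ∀ k, v k ≠ 1} = 2 ^ n := by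
  rw [Nat.card_eq_fintype_card,
    Fintype.card_congr (Equiv.subtypePiEquivPi (p := fun _ x => x ≠ (1 : Fin 3)))]
  simp [Fintype.card_pi]

noncomputable def Acard (n : ℕ) : ℕ := Nat.card {u : Fin n → Fin 3 // Avoid' u}
noncomputable def Tcard (n : ℕ) : ℕ := Nat.card {u : Fin n → Fin 3 // IsTriword u}

lemma noone_avoid {n : ℕ} {v : Fin n → Fin 3} (h : ∀ k, v k ≠ 1) : Avoid' v :=
  fun _ j _ _ => h j

lemma Acard_zero : Acard 0 = 1 := by
  rw [Acard, Nat.card_eq_one_iff_unique]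
  exact ⟨⟨fun a b => by ext i; exact absurd i.2 (by simp)⟩,
    ⟨⟨Fin.elim0, fun i => i.elim0⟩⟩⟩

lemma Tcard_zero : Tcard 0 = 1 := by
  rw [Tcard, Nat.card_eq_one_iff_unique]
  exact ⟨⟨fun a b => by ext i; exact absurd i.2 (by simp)⟩,
    ⟨⟨Fin.elim0, ⟨fun i => i.elim0, fun i => i.elim0⟩⟩⟩⟩

lemma Acard_succ (n : ℕ) : Acard (n+1) = 2 ^ n + 2 * Acard n := by
  rw [Acard, card_succ_s18, Fin.sum_univ_three]
  have h0 : Nat.card {v : Fin n → Fin 3 // Avoid' (Fin.cons 0 v)} = 2 ^ n := by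
    rw [Nat.card_congr (Equiv.subtypeEquivRight (q := fun v => ∀ k, v k ≠ 1) (fun v => by
      rw [avoid_cons]
      exact ⟨fun h => h.1 rfl, fun h => ⟨fun _ => h, noone_avoid h⟩⟩)), card_noone]
  have h1 : Nat.card {v : Fin n → Fin 3 // Avoid' (Fin.cons 1 v)} = Acard n :=
    Nat.card_congr (Equiv.subtypeEquivRight (q := fun v => Avoid' v) (fun v => by
      rw [avoid_cons]
      exact ⟨fun h => h.2, fun h => ⟨fun h' => absurd h' (by decide), h⟩⟩))
  have h2 : Nat.card {v : Fin n → Fin 3 // Avoid' (Fin.cons 2 v)} = Acard n :=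
    Nat.card_congr (Equiv.subtypeEquivRight (q := fun v => Avoid' v) (fun v => by
      rw [avoid_cons]
      exact ⟨fun h => h.2, fun h => ⟨fun h' => absurd h' (by decide), h⟩⟩))
  rw [h0, h1, h2]; ring

lemma Tcard_succ (n : ℕ) : Tcard (n+1) = 2 ^ n + Acard n := by
  rw [Tcard, card_succ_s18, Fin.sum_univ_three]
  have h0 : Nat.card {v : Fin n → Fin 3 // IsTriword (Fin.cons 0 v)} = 2 ^ n := by
    rw [Nat.card_congr (Equiv.subtypeEquivRight (q := fun v => ∀ k, v k ≠ 1) (fun v => by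
      rw [triword_cons]
      exact ⟨fun h => h.2.1 rfl, fun h => ⟨by decide, fun _ => h, noone_avoid h⟩⟩)), card_noone]
  have h1 : Nat.card {v : Fin n → Fin 3 // IsTriword (Fin.cons 1 v)} = Acard n :=
    Nat.card_congr (Equiv.subtypeEquivRight (q := fun v => Avoid' v) (fun v => by
      rw [triword_cons]
      exact ⟨fun h => h.2.2, fun h => ⟨by decide, fun h' => absurd h' (by decide), h⟩⟩))
  have h2 : Nat.card {v : Fin n → Fin 3 // IsTriword (Fin.cons 2 v)} = 0 := by
    have : IsEmpty {v : Fin n → Fin 3 // IsTriword (Fin.cons 2 v)} :=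
      ⟨fun v => ((triword_cons 2 v.1).mp v.2).1 rfl⟩
    exact Nat.card_of_isEmpty
  rw [h0, h1, h2]; ring

lemma Acard_formula (n : ℕ) : 2 * Acard n = (n + 2) * 2 ^ n := by
  induction n with
  | zero => simp [Acard_zero]
  | succ n ih =>
    rw [Acard_succ, Nat.mul_add, Nat.mul_left_comm, ih]
    ring

lemma Tcard_formula (n : ℕ) : 4 * Tcard (n+1) = (n + 4) * 2 ^ (n + 1) := by
  rw [Tcard_succ, Nat.mul_add, show (4 : ℕ) * Acard n = 2 * (2 * Acard n) from by ring,
    Acard_formula]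
  ring

lemma Tcard_one : Tcard 1 = 2 := by
  rw [Tcard_succ, Acard_zero]
  norm_num

lemma Tcard_two : Tcard 2 = 5 := by
  rw [Tcard_succ, Acard_succ, Acard_zero]
  norm_num

lemma Tcard_rec (n : ℕ) :
    (Tcard (n+3) : ℤ) = 4 * (Tcard (n+2) : ℤ) - 4 * (Tcard (n+1) : ℤ) := by
  have h1 : (4 : ℤ) * (Tcard (n+1) : ℤ) = (n + 4) * 2 ^ (n + 1) := by
    exact_mod_cast congrArg (Nat.cast : ℕ → ℤ) (Tcard_formula n)
  have h2 : (4 : ℤ) * (Tcard (n+2) : ℤ) = (n + 5) * 2 ^ (n + 2) := by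
    have := congrArg (Nat.cast : ℕ → ℤ) (Tcard_formula (n+1))
    push_cast at this ⊢; linarith
  have h3 : (4 : ℤ) * (Tcard (n+3) : ℤ) = (n + 6) * 2 ^ (n + 3) := by
    have := congrArg (Nat.cast : ℕ → ℤ) (Tcard_formula (n+2))
    push_cast at this ⊢; linarith
  have key : (4 : ℤ) * ((Tcard (n+3) : ℤ)) = 4 * (4 * (Tcard (n+2) : ℤ) - 4 * (Tcard (n+1) : ℤ)) := by
    have e2 : ((2:ℤ)) ^ (n+2) = 2 * 2 ^ (n+1) := by ring
    have e3 : ((2:ℤ)) ^ (n+3) = 4 * 2 ^ (n+1) := by ring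
    rw [mul_sub]
    nlinarith [h1, h2, h3]
  exact mul_left_cancel₀ (by norm_num : (4:ℤ) ≠ 0) key

/-- The generating function of triwords by size is `(1-z)²/(1-2z)²`, i.e.
`∑_{n≥0} |Tr(n)| zⁿ · (1-2z)² = (1-z)²` as formal power series over `ℤ`. -/
theorem triword_generating_function :
    (PowerSeries.mk fun n => (Nat.card {u : Fin n → Fin 3 // IsTriword u} : ℤ)) *
        (1 - 2 * PowerSeries.X) ^ 2 =
      (1 - PowerSeries.X) ^ 2 := by
  have hmk : (PowerSeries.mk fun n => (Nat.card {u : Fin n → Fin 3 // IsTriword u} : ℤ))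
      = PowerSeries.mk fun n => (Tcard n : ℤ) := rfl
  rw [hmk]
  have expand : (PowerSeries.mk fun n => (Tcard n : ℤ)) * (1 - 2 * PowerSeries.X) ^ 2
      = (PowerSeries.mk fun n => (Tcard n : ℤ))
        - (PowerSeries.C (R := ℤ) 4) * ((PowerSeries.mk fun n => (Tcard n : ℤ)) * PowerSeries.X ^ 1)
        + (PowerSeries.C (R := ℤ) 4) * ((PowerSeries.mk fun n => (Tcard n : ℤ)) * PowerSeries.X ^ 2) := by
    have : (PowerSeries.C (R := ℤ) 4) = (4 : PowerSeries ℤ) := by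
      simp [map_ofNat]
    rw [this]; ring
  have expand2 : ((1 : PowerSeries ℤ) - PowerSeries.X) ^ 2
      = 1 - (PowerSeries.X + PowerSeries.X) + PowerSeries.X ^ 2 := by
    ring
  rw [expand, expand2]
  ext n
  simp only [map_sub, map_add, PowerSeries.coeff_C_mul, PowerSeries.coeff_mul_X_pow',
    PowerSeries.coeff_mk, PowerSeries.coeff_one, PowerSeries.coeff_X_pow, PowerSeries.coeff_X]
  rcases n with _ | _ | _ | n
  · norm_num [Tcard_zero]
  · norm_num [Tcard_zero, Tcard_one]
  · norm_num [Tcard_zero, Tcard_one, Tcard_two]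
  · have h := Tcard_rec n
    norm_num
    simp only [show (n+1+1+1 : ℕ) = n+3 from rfl, show (n+1+1 : ℕ) = n+2 from rfl,
      show (n+1+1+1-2 : ℕ) = n+1 from rfl] at h ⊢
    omega
end
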